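/- arXiv:2509.13058 — 9 statements merged into one kernel-verified Lean document; each statement's English description precedes it below -/
import Mathlib

section
/- Let f : W → V be a p-morphism between Kripke frames. Define U = {(v,i) ∈ V × {0,1} | if i = 0 then v ∉ range(f)}, with relation (v,i) ≺ (v',i') iff v ≺ v' and (i = i' or (i < i' and v' ∈ range(f))); define ι₁ : V → U by ι₁(v) = (v,1), and ι₀ : V → U by ι₀(v) = (v,0) if v ∉ range(f) and ι₀(v) = (v,1) if v ∈ range(f). Then: (i) ι₀ and ι₁ are p-morphisms; (ii) ι₀ ∘ f = ι₁ ∘ f; (iii) the pair (ι₀, ι₁) is the cokernel pair (pushout of f along itself) of f in the category of Kripke frames and p-morphisms; (iv) {v ∈ V | ι₀(v) = ι₁(v)} = range(f); (v) U is a surjective p-morphic image of the disjoint union V ⊔ V. -/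
/-- A p-morphism between Kripke frames `(W, rW)` and `(V, rV)`:
a function that is stable and open. -/
def IsPMorphism {W V : Type*} (rW : W → W → Prop) (rV : V → V → Prop) (f : W → V) : Prop :=
  (∀ ⦃w w'⦄, rW w w' → rV (f w) (f w')) ∧
  (∀ w v', rV (f w) v' → ∃ w', rW w w' ∧ f w' = v')

/-- The underlying set `U = {(v,i) ∈ V × {0,1} | i = 0 → v ∉ range f}` of the cokernel
pair of `f` (we encode `0` as `false` and `1` as `true`). -/
def Cok {W V : Type*} (f : W → V) : Type _ :=
  {p : V × Bool // p.2 = false → p.1 ∉ Set.range f}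

/-- The relation on `U`: `(v,i) ≺ (v',i')` iff `v ≺ v'` and
(`i = i'` or (`i < i'` and `v' ∈ range f`)). -/
def cokRel {W V : Type*} (rV : V → V → Prop) (f : W → V) : Cok f → Cok f → Prop :=
  fun a b => rV a.1.1 b.1.1 ∧ (a.1.2 = b.1.2 ∨ (a.1.2 < b.1.2 ∧ b.1.1 ∈ Set.range f))

/-- `ι₁ : V → U`, `v ↦ (v, 1)`. -/
def iota1 {W V : Type*} (f : W → V) : V → Cok f :=
  fun v => ⟨(v, true), by simp⟩

open Classical in
/-- `ι₀ : V → U`, sending `v` to `(v,0)` if `v ∉ range f` and to `(v,1)` otherwise. -/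
noncomputable def iota0 {W V : Type*} (f : W → V) : V → Cok f :=
  fun v => if h : v ∈ Set.range f then ⟨(v, true), by simp⟩ else ⟨(v, false), fun _ => h⟩

/-! The range of a p-morphism is an up-set, which is what makes `ι₀` stable. Every point of `U`
lies in the image of `ι₀` or of `ι₁`, and the two agree exactly on `range f`; so a pair
`k₀, k₁` agreeing on `range f` induces a unique map `U → Z`, namely `(v, 0) ↦ k₀ v`,
`(v, 1) ↦ k₁ v`, and one checks directly that it is a p-morphism. -/

lemma IsPMorphism.mem_range_of_rel {W V : Type*} {rW : W → W → Prop} {rV : V → V → Prop}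
    {f : W → V} (hf : IsPMorphism rW rV f) {v v' : V} (h : rV v v') (hv : v ∈ Set.range f) :
    v' ∈ Set.range f := by
  obtain ⟨w, rfl⟩ := hv
  obtain ⟨w', -, rfl⟩ := hf.2 w v' h
  exact ⟨w', rfl⟩

lemma IsPMorphism.sum_elim {A B C : Type*} {rA : A → A → Prop} {rB : B → B → Prop}
    {rC : C → C → Prop} {g₀ : A → C} {g₁ : B → C}
    (h₀ : IsPMorphism rA rC g₀) (h₁ : IsPMorphism rB rC g₁) :
    IsPMorphism (Sum.LiftRel rA rB) rC (Sum.elim g₀ g₁) := by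
  refine ⟨fun x y h ↦ ?_, ?_⟩
  · rcases h with ⟨h⟩ | ⟨h⟩
    exacts [h₀.1 h, h₁.1 h]
  · rintro (a | b) c hc
    · obtain ⟨a', ha, rfl⟩ := h₀.2 a c hc
      exact ⟨.inl a', .inl ha, rfl⟩
    · obtain ⟨b', hb, rfl⟩ := h₁.2 b c hc
      exact ⟨.inr b', .inr hb, rfl⟩

section Iota

variable {W V : Type*} {f : W → V}

@[ext]
lemma Cok.ext {p q : Cok f} (h : p.1 = q.1) : p = q := Subtype.ext h

lemma iota0_of_mem {v : V} (h : v ∈ Set.range f) : iota0 f v = iota1 f v := dif_pos h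

lemma iota0_of_notMem {v : V} (h : v ∉ Set.range f) : (iota0 f v).1 = (v, false) := by
  simp [iota0, h]

@[simp] lemma iota0_fst (v : V) : (iota0 f v).1.1 = v := by
  by_cases h : v ∈ Set.range f
  · rw [iota0_of_mem h]; rfl
  · rw [iota0_of_notMem h]

@[simp] lemma iota1_val (v : V) : (iota1 f v).1 = (v, true) := rfl

lemma iota0_eq_iota1_iff {v : V} : iota0 f v = iota1 f v ↔ v ∈ Set.range f := by
  refine ⟨fun h ↦ ?_, iota0_of_mem⟩
  by_contra hv
  simpa [iota0_of_notMem hv] using congrArg (·.1) h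

lemma Cok.iota0_or_iota1_eq (p : Cok f) : iota0 f p.1.1 = p ∨ iota1 f p.1.1 = p := by
  obtain ⟨⟨v, _ | _⟩, hp⟩ := p
  · exact .inl (Cok.ext (iota0_of_notMem (hp rfl)))
  · exact .inr rfl

lemma Cok.surjective_sum_elim_iota : Function.Surjective (Sum.elim (iota0 f) (iota1 f)) := by
  intro p
  rcases Cok.iota0_or_iota1_eq p with hp | hp
  exacts [⟨.inl _, hp⟩, ⟨.inr _, hp⟩]

lemma Cok.hom_ext {Z : Type*} {u u' : Cok f → Z} (h₀ : u ∘ iota0 f = u' ∘ iota0 f)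
    (h₁ : u ∘ iota1 f = u' ∘ iota1 f) : u = u' := by
  funext p
  rcases Cok.iota0_or_iota1_eq p with hp | hp
  · rw [← hp]; exact congrFun h₀ _
  · rw [← hp]; exact congrFun h₁ _

end Iota

section PMorphisms

variable {W V : Type*} {rV : V → V → Prop} {f : W → V}

lemma cokRel_iota0_of_snd_eq_false {p : Cok f} (hp : p.1.2 = false) {v : V}
    (h : rV p.1.1 v) : cokRel rV f p (iota0 f v) := by
  refine ⟨by simpa using h, ?_⟩
  by_cases hv : v ∈ Set.range f
  · rw [iota0_of_mem hv]
    exact .inr ⟨by simp [hp], hv⟩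
  · exact .inl (by rw [hp, iota0_of_notMem hv])

lemma isPMorphism_iota1 : IsPMorphism rV (cokRel rV f) (iota1 f) := by
  refine ⟨fun v v' h ↦ ⟨h, .inl rfl⟩, ?_⟩
  rintro v p ⟨hv, hp⟩
  have hp : p.1.2 = true := by
    rcases hp with hp | ⟨hlt, -⟩
    · exact hp.symm
    · exact absurd hlt (not_lt_of_ge (Bool.le_true _))
  exact ⟨p.1.1, hv, Cok.ext (Prod.ext rfl hp.symm)⟩

lemma isPMorphism_iota0 {rW : W → W → Prop} (hf : IsPMorphism rW rV f) :
    IsPMorphism rV (cokRel rV f) (iota0 f) := by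
  refine ⟨fun v v' h ↦ ?_, ?_⟩
  · by_cases hv : v ∈ Set.range f
    · rw [iota0_of_mem hv, iota0_of_mem (hf.mem_range_of_rel h hv)]
      exact isPMorphism_iota1.1 h
    · exact cokRel_iota0_of_snd_eq_false (by rw [iota0_of_notMem hv]) (by simpa using h)
  · rintro v p ⟨hv, hp⟩
    refine ⟨p.1.1, by simpa using hv, ?_⟩
    rcases Cok.iota0_or_iota1_eq p with hp₀ | hp₁
    · exact hp₀
    refine (iota0_of_mem ?_).trans hp₁
    by_cases hv' : v ∈ Set.range f
    · exact hf.mem_range_of_rel (by simpa using hv) hv'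
    · rw [← hp₁, iota0_of_notMem hv'] at hp
      simpa using hp

end PMorphisms

namespace Cok

variable {W V Z : Type*} {rV : V → V → Prop} {rZ : Z → Z → Prop} {f : W → V}

def lift (k₀ k₁ : V → Z) : Cok f → Z := fun p ↦ bif p.1.2 then k₁ p.1.1 else k₀ p.1.1

lemma lift_comp_iota1 (k₀ k₁ : V → Z) : lift k₀ k₁ ∘ iota1 f = k₁ := rfl

lemma lift_comp_iota0 {k₀ k₁ : V → Z} (hk : k₀ ∘ f = k₁ ∘ f) : lift k₀ k₁ ∘ iota0 f = k₀ := by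
  funext v
  by_cases hv : v ∈ Set.range f
  · simp only [Function.comp_apply, iota0_of_mem hv]
    exact (Set.eqOn_range.2 hk hv).symm
  · simp [lift, iota0_of_notMem hv]

lemma isPMorphism_lift {k₀ k₁ : V → Z} (hk₀ : IsPMorphism rV rZ k₀) (hk₁ : IsPMorphism rV rZ k₁)
    (hk : k₀ ∘ f = k₁ ∘ f) : IsPMorphism (cokRel rV f) rZ (lift k₀ k₁) := by
  refine ⟨?_, ?_⟩
  · rintro ⟨⟨v, _ | _⟩, hp⟩ ⟨⟨v', _ | _⟩, hq⟩ ⟨h, hb⟩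
    · exact hk₀.1 h
    · obtain ⟨-, hv'⟩ := hb.resolve_left Bool.false_ne_true
      show rZ (k₀ v) (k₁ v')
      rw [← Set.eqOn_range.2 hk hv']
      exact hk₀.1 h
    · exact absurd (hb.resolve_left Bool.noConfusion).1 (not_lt_of_ge (Bool.le_true _))
    · exact hk₁.1 h
  · rintro ⟨⟨v, _ | _⟩, hp⟩ z hz
    · obtain ⟨v', h, rfl⟩ := hk₀.2 v z hz
      exact ⟨iota0 f v', cokRel_iota0_of_snd_eq_false rfl h, congrFun (lift_comp_iota0 hk) v'⟩
    · obtain ⟨v', h, rfl⟩ := hk₁.2 v z hz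
      exact ⟨iota1 f v', ⟨h, .inl rfl⟩, rfl⟩

end Cok

/-- For a p-morphism `f : W → V`: (i) `ι₀` and `ι₁` are p-morphisms;
(ii) `ι₀ ∘ f = ι₁ ∘ f`; (iii) `(ι₀, ι₁)` is the cokernel pair (the pushout of `f`
along itself) in the category of Kripke frames and p-morphisms;
(iv) `{v | ι₀ v = ι₁ v} = range f`; (v) `U` is a surjective p-morphic image of the
disjoint union `V ⊔ V` (equipped with the disjoint union of the relations). -/
theorem statement1 {W V : Type*} (rW : W → W → Prop) (rV : V → V → Prop)
    (f : W → V) (hf : IsPMorphism rW rV f) :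
    -- (i)
    IsPMorphism rV (cokRel rV f) (iota0 f) ∧
    IsPMorphism rV (cokRel rV f) (iota1 f) ∧
    -- (ii)
    iota0 f ∘ f = iota1 f ∘ f ∧
    -- (iii) universal property of the pushout of `f` along itself
    (∀ (Z : Type*) (rZ : Z → Z → Prop) (k₀ k₁ : V → Z),
      IsPMorphism rV rZ k₀ → IsPMorphism rV rZ k₁ → k₀ ∘ f = k₁ ∘ f →
      ∃! u : Cok f → Z,
        IsPMorphism (cokRel rV f) rZ u ∧ u ∘ iota0 f = k₀ ∧ u ∘ iota1 f = k₁) ∧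
    -- (iv)
    {v | iota0 f v = iota1 f v} = Set.range f ∧
    -- (v)
    (∃ q : V ⊕ V → Cok f,
      IsPMorphism (Sum.LiftRel rV rV) (cokRel rV f) q ∧ Function.Surjective q) := by
  have hι₀ := isPMorphism_iota0 hf
  refine ⟨hι₀, isPMorphism_iota1, funext fun w ↦ iota0_of_mem ⟨w, rfl⟩, ?_,
    Set.ext fun _ ↦ iota0_eq_iota1_iff, ⟨_, hι₀.sum_elim isPMorphism_iota1,
    Cok.surjective_sum_elim_iota⟩⟩
  intro Z rZ k₀ k₁ hk₀ hk₁ hk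
  refine ⟨Cok.lift k₀ k₁, ⟨Cok.isPMorphism_lift hk₀ hk₁ hk, Cok.lift_comp_iota0 hk,
    Cok.lift_comp_iota1 k₀ k₁⟩, ?_⟩
  rintro u ⟨-, hu₀, hu₁⟩
  exact Cok.hom_ext (hu₀.trans (Cok.lift_comp_iota0 hk).symm) hu₁
end

section
/- Let 𝒞 be a class of Kripke frames closed under surjective p-morphic images and under binary disjoint unions, and consider the category whose objects are the frames in 𝒞 and whose morphisms are p-morphisms. Then a morphism f : W → V in this category is an epimorphism if and only if f is surjective. -/
open CategoryTheory

universe u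

/-- A Kripke frame: a set together with a binary relation on it. -/
structure KFrame : Type (u + 1) where
  carrier : Type u
  rel : carrier → carrier → Prop

instance : CoeSort KFrame.{u} (Type u) := ⟨KFrame.carrier⟩

/-- Bundled p-morphisms between Kripke frames. -/
structure PMor (W V : KFrame.{u}) : Type u where
  toFun : W → V
  isPMorphism : IsPMorphism W.rel V.rel toFun

@[ext] lemma PMor.ext {W V : KFrame.{u}} {f g : PMor W V} (h : f.toFun = g.toFun) : f = g := by
  cases f; cases g; simpa using h

/-- The category `KFr` of Kripke frames and p-morphisms. -/
instance : Category KFrame.{u} where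
  Hom := PMor
  id W := ⟨id, fun _ _ h => h, fun w v' h => ⟨v', h, rfl⟩⟩
  comp f g := ⟨g.toFun ∘ f.toFun,
    fun _ _ h => g.isPMorphism.1 (f.isPMorphism.1 h),
    fun w z h => by
      obtain ⟨v', hv', hgz⟩ := g.isPMorphism.2 _ z h
      obtain ⟨w', hw', hfv⟩ := f.isPMorphism.2 w v' hv'
      exact ⟨w', hw', by simp [Function.comp, hfv, hgz]⟩⟩
  id_comp f := PMor.ext rfl
  comp_id f := PMor.ext rfl
  assoc f g h := PMor.ext rfl

/-- The disjoint union of two Kripke frames, with the disjoint union of the relations. -/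
def KFrame.sum (W V : KFrame.{u}) : KFrame.{u} :=
  ⟨W.carrier ⊕ V.carrier, Sum.LiftRel W.rel V.rel⟩


section Aux

variable (Y : KFrame.{u}) (S : Set Y.carrier)

/-- Auxiliary frame: `Y` plus an extra copy of the complement of `S`. -/
def auxFrame : KFrame.{u} where
  carrier := Y.carrier ⊕ {v : Y.carrier // v ∉ S}
  rel z z' := match z, z' with
    | .inl v, .inl v' => Y.rel v v'
    | .inl _, .inr _ => False
    | .inr v, .inl v' => Y.rel v.1 v' ∧ v' ∈ S
    | .inr v, .inr v' => Y.rel v.1 v'.1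

open Classical in
/-- Collapsing map from `Y ⊔ Y` onto `auxFrame Y S`. -/
noncomputable def auxQFun : (KFrame.sum Y Y).carrier → (auxFrame Y S).carrier :=
  fun z => match z with
    | .inl v => Sum.inl v
    | .inr v => if h : v ∈ S then Sum.inl v else Sum.inr ⟨v, h⟩

lemma auxQ_pmor (hS : ∀ v ∈ S, ∀ v', Y.rel v v' → v' ∈ S) : IsPMorphism (KFrame.sum Y Y).rel (auxFrame Y S).rel (auxQFun Y S) := by
  classical
  constructor
  · rintro z z' (h | h)
    · exact h
    · rename_i v v'
      show (auxFrame Y S).rel (auxQFun Y S (.inr v)) (auxQFun Y S (.inr v'))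
      unfold auxQFun
      by_cases hv : v ∈ S
      · have hv' : v' ∈ S := hS v hv v' h
        dsimp only
        erw [dif_pos hv, dif_pos hv']
        exact h
      · by_cases hv' : v' ∈ S
        · dsimp only
          erw [dif_neg hv, dif_pos hv']
          exact ⟨h, hv'⟩
        · dsimp only
          erw [dif_neg hv, dif_neg hv']
          exact h
  · intro z z' hrel
    match z with
    | .inl v =>
      match z' with
      | .inl v' =>
        exact ⟨.inl v', Sum.LiftRel.inl hrel, rfl⟩
      | .inr v' => exact absurd hrel (by exact fun h => h)
    | .inr v =>
      by_cases hv : v ∈ S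
      · have hq : auxQFun Y S (.inr v) = Sum.inl v := by
          unfold auxQFun; exact dif_pos hv
        rw [hq] at hrel
        match z' with
        | .inl v' =>
          have hv' : v' ∈ S := hS v hv v' hrel
          exact ⟨.inr v', Sum.LiftRel.inr hrel, by unfold auxQFun; exact dif_pos hv'⟩
        | .inr v' => exact absurd hrel (fun h => h)
      · have hq : auxQFun Y S (.inr v) = Sum.inr ⟨v, hv⟩ := by
          unfold auxQFun; exact dif_neg hv
        rw [hq] at hrel
        match z' with
        | .inl v' =>
          exact ⟨.inr v', Sum.LiftRel.inr hrel.1, by unfold auxQFun; exact dif_pos hrel.2⟩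
        | .inr v' =>
          exact ⟨.inr v'.1, Sum.LiftRel.inr hrel, by unfold auxQFun; exact dif_neg v'.2⟩

lemma auxQ_surj : Function.Surjective (auxQFun Y S) := by
  classical
  rintro (v | ⟨v, hv⟩)
  · exact ⟨.inl v, rfl⟩
  · exact ⟨.inr v, by unfold auxQFun; exact dif_neg hv⟩

/-- The first comparison map: the left inclusion. -/
lemma auxG1_pmor : IsPMorphism Y.rel (auxFrame Y S).rel Sum.inl := by
  constructor
  · intro v v' h; exact h
  · intro v z' hrel
    match z' with
    | .inl v' => exact ⟨v', hrel, rfl⟩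
    | .inr v' => exact absurd hrel (fun h => h)

open Classical in
noncomputable def auxG2Fun : Y.carrier → (auxFrame Y S).carrier :=
  fun v => if h : v ∈ S then Sum.inl v else Sum.inr ⟨v, h⟩

lemma auxG2_pmor (hS : ∀ v ∈ S, ∀ v', Y.rel v v' → v' ∈ S) : IsPMorphism Y.rel (auxFrame Y S).rel (auxG2Fun Y S) := by
  classical
  constructor
  · intro v v' h
    unfold auxG2Fun
    by_cases hv : v ∈ S
    · have hv' : v' ∈ S := hS v hv v' h
      erw [dif_pos hv, dif_pos hv']; exact h
    · by_cases hv' : v' ∈ S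
      · erw [dif_neg hv, dif_pos hv']; exact ⟨h, hv'⟩
      · erw [dif_neg hv, dif_neg hv']; exact h
  · intro v z' hrel
    by_cases hv : v ∈ S
    · have hq : auxG2Fun Y S v = Sum.inl v := by unfold auxG2Fun; exact dif_pos hv
      rw [hq] at hrel
      match z' with
      | .inl v' =>
        have hv' : v' ∈ S := hS v hv v' hrel
        exact ⟨v', hrel, by unfold auxG2Fun; exact dif_pos hv'⟩
      | .inr v' => exact absurd hrel (fun h => h)
    · have hq : auxG2Fun Y S v = Sum.inr ⟨v, hv⟩ := by unfold auxG2Fun; exact dif_neg hv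
      rw [hq] at hrel
      match z' with
      | .inl v' =>
        exact ⟨v', hrel.1, by unfold auxG2Fun; exact dif_pos hrel.2⟩
      | .inr v' =>
        exact ⟨v'.1, hrel, by unfold auxG2Fun; exact dif_neg v'.2⟩

end Aux

/-- Let `𝒞` be a class of Kripke frames closed under surjective
p-morphic images and under binary disjoint unions.  In the full subcategory of `KFr`
on `𝒞`, a morphism `f : W → V` is an epimorphism iff it is surjective. -/
theorem statement2 (𝒞 : Set KFrame.{u})
    (himg : ∀ W ∈ 𝒞, ∀ V : KFrame.{u},
      (∃ f : PMor W V, Function.Surjective f.toFun) → V ∈ 𝒞)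
    (hsum : ∀ W ∈ 𝒞, ∀ V ∈ 𝒞, KFrame.sum W V ∈ 𝒞)
    (X Y : ObjectProperty.FullSubcategory (fun W => W ∈ 𝒞)) (f : X ⟶ Y) :
    Epi f ↔ Function.Surjective (PMor.toFun f.hom) := by
  classical
  constructor
  · intro hepi
    set S : Set Y.obj.carrier := Set.range f.hom.toFun with hSdef
    have hS : ∀ v ∈ S, ∀ v', Y.obj.rel v v' → v' ∈ S := by
      rintro v ⟨w, rfl⟩ v' h
      obtain ⟨w', _, rfl⟩ := f.hom.isPMorphism.2 w v' h
      exact ⟨w', rfl⟩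
    have hYsum : KFrame.sum Y.obj Y.obj ∈ 𝒞 := hsum _ Y.property _ Y.property
    have hZ : auxFrame Y.obj S ∈ 𝒞 :=
      himg _ hYsum _ ⟨⟨auxQFun Y.obj S, auxQ_pmor Y.obj S hS⟩, auxQ_surj Y.obj S⟩
    let Z : ObjectProperty.FullSubcategory (fun W => W ∈ 𝒞) := ⟨auxFrame Y.obj S, hZ⟩
    let g₁ : Y ⟶ Z := ObjectProperty.homMk (⟨Sum.inl, auxG1_pmor Y.obj S⟩ : PMor Y.obj (auxFrame Y.obj S))
    let g₂ : Y ⟶ Z := ObjectProperty.homMk (⟨auxG2Fun Y.obj S, auxG2_pmor Y.obj S hS⟩ : PMor Y.obj (auxFrame Y.obj S))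
    have hcomp : f ≫ g₁ = f ≫ g₂ := by
      apply ObjectProperty.hom_ext
      apply PMor.ext
      funext w
      show Sum.inl (f.hom.toFun w) = auxG2Fun Y.obj S (f.hom.toFun w)
      unfold auxG2Fun
      erw [dif_pos (⟨w, rfl⟩ : f.hom.toFun w ∈ S)]
    have heq : g₁ = g₂ := hepi.left_cancellation g₁ g₂ hcomp
    intro v
    by_contra hv
    have h1 : g₁.hom.toFun v = g₂.hom.toFun v := by rw [heq]
    have h2 : (Sum.inl v : (auxFrame Y.obj S).carrier) = Sum.inr ⟨v, hv⟩ := by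
      rw [show (Sum.inl v : (auxFrame Y.obj S).carrier) = g₁.hom.toFun v from rfl, h1]
      show auxG2Fun Y.obj S v = _
      unfold auxG2Fun
      exact dif_neg hv
    exact absurd h2 (by simp)
  · intro hsurj
    constructor
    intro Z g h hgh
    apply ObjectProperty.hom_ext
    apply PMor.ext
    funext v
    obtain ⟨w, rfl⟩ := hsurj v
    exact congrFun (congrArg (fun k => PMor.toFun k.hom) hgh) w
end

section
/- Let 𝒞 be a class of Kripke frames closed under generated subframes, under surjective p-morphic images, and under binary disjoint unions, and consider the category whose objects are the frames in 𝒞 and whose morphisms are p-morphisms. Then a morphism f : W → V in this category is a regular monomorphism (i.e., an equalizer of some parallel pair of morphisms) if and only if f is injective. -/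
open CategoryTheory

universe u

/-- The generated subframe of a Kripke frame determined by a subset (with the
restricted relation). -/
def KFrame.subframe (W : KFrame.{u}) (G : Set W.carrier) : KFrame.{u} :=
  ⟨G, fun a b => W.rel a.1 b.1⟩

/-- Let `𝒞` be a class of Kripke frames closed under generated
subframes, surjective p-morphic images and binary disjoint unions.  In the full
subcategory of `KFr` on `𝒞`, a morphism `f : W → V` is a regular monomorphism
(an equalizer of some parallel pair) iff it is injective. -/
theorem statement3 (𝒞 : Set KFrame.{u})
    (hgen : ∀ W ∈ 𝒞, ∀ G : Set W.carrier,
      (∀ w ∈ G, ∀ w', W.rel w w' → w' ∈ G) → KFrame.subframe W G ∈ 𝒞)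
    (himg : ∀ W ∈ 𝒞, ∀ V : KFrame.{u},
      (∃ f : PMor W V, Function.Surjective f.toFun) → V ∈ 𝒞)
    (hsum : ∀ W ∈ 𝒞, ∀ V ∈ 𝒞, KFrame.sum W V ∈ 𝒞)
    (X Y : ObjectProperty.FullSubcategory (fun W => W ∈ 𝒞)) (f : X ⟶ Y) :
    Nonempty (RegularMono f) ↔ Function.Injective f.hom.toFun := by
  constructor
  · rintro ⟨rm⟩
    set L := rm.left with hL
    set R := rm.right with hR
    have hw : ∀ x, L.hom.toFun (f.hom.toFun x) = R.hom.toFun (f.hom.toFun x) := fun x =>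
      congrFun (congrArg (fun g => g.hom.toFun) rm.w) x
    set E : Set Y.obj.carrier :=
      {y | ∀ z, Relation.ReflTransGen Y.obj.rel y z → L.hom.toFun z = R.hom.toFun z} with hEdef
    have hEup : ∀ w ∈ E, ∀ w', Y.obj.rel w w' → w' ∈ E := fun y hy y' hr z hz =>
      hy z (Relation.ReflTransGen.head hr hz)
    have hTmem : KFrame.subframe Y.obj E ∈ 𝒞 := hgen Y.obj Y.property E hEup
    let T : ObjectProperty.FullSubcategory (fun W => W ∈ 𝒞) := ⟨KFrame.subframe Y.obj E, hTmem⟩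
    let ι : T ⟶ Y := ObjectProperty.homMk ⟨Subtype.val, fun a b h => h,
      fun a z h => ⟨⟨z, hEup a.1 a.2 z h⟩, h, rfl⟩⟩
    have hι : ι ≫ L = ι ≫ R :=
      InducedCategory.hom_ext (PMor.ext (funext fun t => t.2 t.1 Relation.ReflTransGen.refl))
    obtain ⟨u, hu⟩ := Limits.Fork.IsLimit.lift' rm.isLimit ι hι
    have hreach : ∀ x z, Relation.ReflTransGen Y.obj.rel (f.hom.toFun x) z →
        ∃ x', f.hom.toFun x' = z := by
      intro x z h
      induction h with
      | refl => exact ⟨x, rfl⟩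
      | tail h₁ h₂ ih =>
        obtain ⟨x', hx'⟩ := ih
        obtain ⟨x'', _, hx''⟩ := f.hom.isPMorphism.2 x' _ (hx' ▸ h₂)
        exact ⟨x'', hx''⟩
    have hfE : ∀ x, f.hom.toFun x ∈ E := by
      intro x z hz
      obtain ⟨x', hx'⟩ := hreach x z hz
      rw [← hx']; exact hw x'
    let f' : X ⟶ T := ObjectProperty.homMk ⟨fun x => ⟨f.hom.toFun x, hfE x⟩,
      fun a b h => f.hom.isPMorphism.1 h,
      fun x z h => by
        obtain ⟨x', hr, hx'⟩ := f.hom.isPMorphism.2 x z.1 h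
        exact ⟨x', hr, Subtype.ext hx'⟩⟩
    have hfact : f' ≫ ι = f := InducedCategory.hom_ext (PMor.ext rfl)
    have hsplit : f' ≫ u = 𝟙 X := by
      apply Limits.Fork.IsLimit.hom_ext rm.isLimit
      rw [Category.assoc, hu, hfact, Category.id_comp, Limits.Fork.ι_ofι]
    intro a b hab
    have h1 : f'.hom.toFun a = f'.hom.toFun b := Subtype.ext hab
    have ha := congrFun (congrArg (fun g => g.hom.toFun) hsplit) a
    have hb := congrFun (congrArg (fun g => g.hom.toFun) hsplit) b
    calc a = u.hom.toFun (f'.hom.toFun a) := ha.symm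
    _ = u.hom.toFun (f'.hom.toFun b) := by rw [h1]
    _ = b := hb
  · intro hinj
    classical
    set S : Set Y.obj.carrier := Set.range f.hom.toFun with hSdef
    have hSup : ∀ y ∈ S, ∀ y', Y.obj.rel y y' → y' ∈ S := by
      rintro y ⟨x, rfl⟩ y' hr
      obtain ⟨x', _, hx'⟩ := f.hom.isPMorphism.2 x y' hr
      exact ⟨x', hx'⟩
    let YY := Y.obj.carrier ⊕ Y.obj.carrier
    let r0 : YY → YY → Prop := fun a b => ∃ y ∈ S, a = Sum.inl y ∧ b = Sum.inr y
    let q : YY → Quot r0 := Quot.mk r0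
    let Rel : YY → YY → Prop := fun a b => a = b ∨
      (∃ y ∈ S, a = Sum.inl y ∧ b = Sum.inr y) ∨
      (∃ y ∈ S, a = Sum.inr y ∧ b = Sum.inl y)
    have hresp : ∀ a : YY, ∀ u v : YY, r0 u v → Rel a u = Rel a v := by
      rintro a u v ⟨y, hy, rfl, rfl⟩
      apply propext
      constructor
      · rintro (rfl | ⟨z, hz, h1, h2⟩ | ⟨z, hz, h1, h2⟩)
        · exact Or.inr (Or.inl ⟨y, hy, rfl, rfl⟩)
        · exact absurd h2 (by simp)
        · cases Sum.inl_injective h2.symm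
          exact Or.inl h1
      · rintro (rfl | ⟨z, hz, h1, h2⟩ | ⟨z, hz, h1, h2⟩)
        · exact Or.inr (Or.inr ⟨y, hy, rfl, rfl⟩)
        · cases Sum.inr_injective h2.symm
          exact Or.inl h1
        · exact absurd h2 (by simp)
    have hexact : ∀ a b : YY, q a = q b → Rel a b := by
      intro a b h
      have : Quot.lift (Rel a) (hresp a) (q b) := by
        rw [← h]; exact Or.inl rfl
      exact this
    let rZ : Quot r0 → Quot r0 → Prop := fun a b =>
      ∃ a' b', q a' = a ∧ q b' = b ∧ Sum.LiftRel Y.obj.rel Y.obj.rel a' b'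
    let ZF : KFrame.{u} := ⟨Quot r0, rZ⟩
    have qopen : ∀ a c, rZ (q a) c →
        ∃ b, Sum.LiftRel Y.obj.rel Y.obj.rel a b ∧ q b = c := by
      rintro a c ⟨a', b', ha', rfl, hlr⟩
      rcases hexact a' a ha' with rfl | ⟨y, hy, rfl, rfl⟩ | ⟨y, hy, rfl, rfl⟩
      · exact ⟨b', hlr, rfl⟩
      · cases hlr with
        | inl h' =>
          rename_i z
          exact ⟨Sum.inr z, Sum.LiftRel.inr h',
            (Quot.sound ⟨z, hSup y hy z h', rfl, rfl⟩).symm⟩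
      · cases hlr with
        | inr h' =>
          rename_i z
          exact ⟨Sum.inl z, Sum.LiftRel.inl h',
            Quot.sound ⟨z, hSup y hy z h', rfl, rfl⟩⟩
    have hq : IsPMorphism (KFrame.sum Y.obj Y.obj).rel rZ q :=
      ⟨fun a b h => ⟨a, b, rfl, rfl, h⟩, fun a c h => by
        obtain ⟨b, h1, h2⟩ := qopen a c h
        exact ⟨b, h1, h2⟩⟩
    have hZmem : ZF ∈ 𝒞 :=
      himg (KFrame.sum Y.obj Y.obj) (hsum Y.obj Y.property Y.obj Y.property) ZF
        ⟨⟨q, hq⟩, fun z => Quot.exists_rep z⟩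
    let Zobj : ObjectProperty.FullSubcategory (fun W => W ∈ 𝒞) := ⟨ZF, hZmem⟩
    let gm : Y ⟶ Zobj := ObjectProperty.homMk ⟨fun y => q (Sum.inl y),
      fun a b h => ⟨Sum.inl a, Sum.inl b, rfl, rfl, Sum.LiftRel.inl h⟩,
      fun y c h => by
        obtain ⟨b, hlr, hb⟩ := qopen (Sum.inl y) c h
        cases hlr with
        | inl h' => exact ⟨_, h', hb⟩⟩
    let hm : Y ⟶ Zobj := ObjectProperty.homMk ⟨fun y => q (Sum.inr y),
      fun a b h => ⟨Sum.inr a, Sum.inr b, rfl, rfl, Sum.LiftRel.inr h⟩,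
      fun y c h => by
        obtain ⟨b, hlr, hb⟩ := qopen (Sum.inr y) c h
        cases hlr with
        | inr h' => exact ⟨_, h', hb⟩⟩
    have hwk : f ≫ gm = f ≫ hm :=
      InducedCategory.hom_ext (PMor.ext (funext fun x => Quot.sound ⟨f.hom.toFun x, ⟨x, rfl⟩, rfl, rfl⟩))
    refine ⟨{ Z := Zobj, left := gm, right := hm, w := hwk, isLimit := ?_ }⟩
    apply Limits.Fork.IsLimit.mk'
    intro s
    have hcond : ∀ t : s.pt.obj.carrier,
        q (Sum.inl (s.ι.hom.toFun t)) = q (Sum.inr (s.ι.hom.toFun t)) := fun t =>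
      congrFun (congrArg (fun g => g.hom.toFun) s.condition) t
    have hmem : ∀ t : s.pt.obj.carrier, s.ι.hom.toFun t ∈ S := by
      intro t
      rcases hexact _ _ (hcond t) with h | ⟨y, hy, h1, h2⟩ | ⟨y, hy, h1, h2⟩
      · exact absurd h (by simp)
      · cases Sum.inl_injective h1
        exact hy
      · exact absurd h1 (by simp)
    have lsp : ∀ t, f.hom.toFun (hmem t).choose = s.ι.hom.toFun t := fun t => (hmem t).choose_spec
    let l : s.pt ⟶ X := ObjectProperty.homMk ⟨fun t => (hmem t).choose,
      fun a b h => by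
        have hr : Y.obj.rel (f.hom.toFun (hmem a).choose) (f.hom.toFun (hmem b).choose) := by
          rw [lsp a, lsp b]; exact s.ι.hom.isPMorphism.1 h
        obtain ⟨x', hx1, hx2⟩ := f.hom.isPMorphism.2 _ _ hr
        rwa [hinj hx2] at hx1,
      fun t x' h => by
        have hr : Y.obj.rel (s.ι.hom.toFun t) (f.hom.toFun x') := by
          rw [← lsp t]; exact f.hom.isPMorphism.1 h
        obtain ⟨t', ht1, ht2⟩ := s.ι.hom.isPMorphism.2 t _ hr
        refine ⟨t', ht1, hinj ?_⟩
        rw [lsp t', ht2]⟩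
    refine ⟨l, ?_, ?_⟩
    · rw [Limits.Fork.ι_ofι]
      exact InducedCategory.hom_ext (PMor.ext (funext fun t => lsp t))
    · intro m hmeq
      rw [Limits.Fork.ι_ofι] at hmeq
      refine InducedCategory.hom_ext (PMor.ext ?_)
      funext t
      apply hinj
      exact (congrFun (congrArg (fun g => g.hom.toFun) hmeq) t).trans (lsp t).symm
end

section
/- Let 𝒞 be a class of locally finite transitive Kripke frames closed under generated subframes, and consider the category whose objects are the frames in 𝒞 and whose morphisms are p-morphisms. Then a morphism f : W → V in this category is a monomorphism if and only if f is injective. -/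
open CategoryTheory

universe u

/-- A Kripke frame is locally finite if for each point `w` the set `w*` of points
reachable from `w` by a finite chain is finite. -/
def KFrame.LocallyFinite (W : KFrame.{u}) : Prop :=
  ∀ w : W.carrier, {w' | Relation.ReflTransGen W.rel w w'}.Finite

private lemma rtg_of_trans {α : Type*} {r : α → α → Prop} (ht : Transitive r) {a b : α}
    (h : Relation.ReflTransGen r a b) : a = b ∨ r a b := by
  induction h with
  | refl => exact Or.inl rfl
  | tail _ h2 ih =>
    rcases ih with rfl | ih
    · exact Or.inr h2
    · exact Or.inr (ht ih h2)

open Classical in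
/-- The transposition of `p` and `q`. -/
private noncomputable def swap2 {α : Type*} (p q x : α) : α :=
  if x = p then q else if x = q then p else x

private lemma swap2_invol {α : Type*} {p q : α} (hpq : p ≠ q) (x : α) :
    swap2 p q (swap2 p q x) = x := by
  unfold swap2
  by_cases h1 : x = p
  · simp [h1, hpq, Ne.symm hpq]
  · by_cases h2 : x = q
    · simp [h1, h2, hpq]
    · simp [h1, h2]

private lemma swap2_left {α : Type*} (p q : α) : swap2 p q p = q := by simp [swap2]

/-- Let `𝒞` be a class of locally finite transitive Kripke frames
closed under generated subframes.  In the full subcategory of `KFr` on `𝒞`, a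
morphism `f : W → V` is a monomorphism iff it is injective. -/
theorem statement4 (𝒞 : Set KFrame.{u})
    (hlf : ∀ W ∈ 𝒞, W.LocallyFinite)
    (htr : ∀ W ∈ 𝒞, Transitive W.rel)
    (hgen : ∀ W ∈ 𝒞, ∀ G : Set W.carrier,
      (∀ w ∈ G, ∀ w', W.rel w w' → w' ∈ G) → KFrame.subframe W G ∈ 𝒞)
    (X Y : ObjectProperty.FullSubcategory (fun W => W ∈ 𝒞)) (f : X ⟶ Y) :
    Mono f ↔ Function.Injective f.hom.toFun := by
  constructor
  · -- mono → injective
    intro hm a b hfab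
    by_contra hne
    have htrans : Transitive X.obj.rel := htr X.obj X.property
    set F := f.hom.toFun with hFdef
    -- the "star" of a point
    set star : X.obj.carrier → Set X.obj.carrier :=
      fun x => {y | Relation.ReflTransGen X.obj.rel x y} with hstardef
    have hstarfin : ∀ x, (star x).Finite := hlf X.obj X.property
    have hstarup : ∀ x, ∀ w ∈ star x, ∀ w', X.obj.rel w w' → w' ∈ star x :=
      fun x w hw w' hrel => hw.tail hrel
    -- key lemma: any p-morphism from a generated subframe to X agreeing with the
    -- inclusion after composing with f must be the inclusion
    have key : ∀ (G : Set X.obj.carrier)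
        (hG : ∀ w ∈ G, ∀ w', X.obj.rel w w' → w' ∈ G)
        (h : PMor (X.obj.subframe G) X.obj),
        (∀ x, F (h.toFun x) = F x.1) → ∀ x, h.toFun x = x.1 := by
      intro G hG h hcomm x
      let Z : ObjectProperty.FullSubcategory (fun W => W ∈ 𝒞) := ⟨X.obj.subframe G, hgen X.obj X.property G hG⟩
      let g : Z ⟶ X := InducedCategory.homMk (⟨Subtype.val, fun _ _ hrel => hrel,
        fun w v' hrel => ⟨⟨v', hG w.1 w.2 v' hrel⟩, hrel, rfl⟩⟩ : PMor (X.obj.subframe G) X.obj)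
      let h' : Z ⟶ X := InducedCategory.homMk h
      have hcomp : h' ≫ f = g ≫ f := by
        apply InducedCategory.hom_ext
        apply PMor.ext
        funext y
        exact hcomm y
      have heq := hm.right_cancellation h' g hcomp
      exact congrFun (congrArg (fun k => k.hom.toFun) heq) x
    -- minimal counterexample pair
    set S : Set ℕ := {n | ∃ u w : X.obj.carrier, u ≠ w ∧ F u = F w ∧ (star u).ncard = n}
      with hSdef
    have hSne : S.Nonempty := ⟨(star a).ncard, a, b, hne, hfab, rfl⟩
    obtain ⟨u0, w0, hne0, hf0, hcard0⟩ := Nat.sInf_mem hSne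
    by_cases hinj2 : ∀ z ∈ star u0, ∀ z' ∈ star u0, F z = F z' → z = z'
    · -- f is injective on (star u0): lift b* into a* along f
      have hex : ∀ y : (X.obj.subframe (star w0)).carrier, ∃ z, z ∈ star u0 ∧ F z = F y.1 := by
        intro y
        rcases rtg_of_trans htrans y.2 with heq | hrel
        · exact ⟨u0, Relation.ReflTransGen.refl, heq ▸ hf0⟩
        · have h1 : Y.obj.rel (F u0) (F y.1) := by
            rw [hf0]; exact f.hom.isPMorphism.1 hrel
          obtain ⟨z, hz1, hz2⟩ := f.hom.isPMorphism.2 u0 (F y.1) h1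
          exact ⟨z, Relation.ReflTransGen.single hz1, hz2⟩
      choose hfn hmem hval using hex
      have hstab : ∀ ⦃x y : (X.obj.subframe (star w0)).carrier⦄,
          (X.obj.subframe (star w0)).rel x y → X.obj.rel (hfn x) (hfn y) := by
        intro x y hxy
        have h1 : Y.obj.rel (F (hfn x)) (F y.1) := by
          rw [hval x]; exact f.hom.isPMorphism.1 hxy
        obtain ⟨z, hz1, hz2⟩ := f.hom.isPMorphism.2 (hfn x) (F y.1) h1
        have hzmem : z ∈ star u0 := (hmem x).tail hz1
        have hz : z = hfn y := hinj2 z hzmem (hfn y) (hmem y) (hz2.trans (hval y).symm)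
        rwa [hz] at hz1
      have hopen : ∀ (x : (X.obj.subframe (star w0)).carrier) v', X.obj.rel (hfn x) v' →
          ∃ x', (X.obj.subframe (star w0)).rel x x' ∧ hfn x' = v' := by
        intro x v' hrel
        have hv' : v' ∈ star u0 := (hmem x).tail hrel
        have h1 : Y.obj.rel (F x.1) (F v') := by
          rw [← hval x]; exact f.hom.isPMorphism.1 hrel
        obtain ⟨z, hz1, hz2⟩ := f.hom.isPMorphism.2 x.1 (F v') h1
        refine ⟨⟨z, x.2.tail hz1⟩, hz1, ?_⟩
        exact hinj2 _ (hmem ⟨z, x.2.tail hz1⟩) v' hv' ((hval _).trans hz2)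
      have hkey := key (star w0) (hstarup w0) ⟨hfn, hstab, hopen⟩ (fun x => hval x)
      have h1 : hfn ⟨w0, Relation.ReflTransGen.refl⟩ = w0 := hkey ⟨w0, Relation.ReflTransGen.refl⟩
      have h2 : hfn ⟨w0, Relation.ReflTransGen.refl⟩ = u0 :=
        hinj2 _ (hmem _) u0 Relation.ReflTransGen.refl
          (by exact (hval _).trans hf0.symm)
      exact hne0 (h2.symm.trans h1)
    · -- there is a non-injective pair inside star u0; by minimality they are cluster mates
      push_neg at hinj2
      obtain ⟨p, hp, q, hq, hFpq, hpq⟩ := hinj2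
      have hS1 : (star p).ncard ∈ S := ⟨p, q, hpq, hFpq, rfl⟩
      have hS2 : (star q).ncard ∈ S := ⟨q, p, Ne.symm hpq, hFpq.symm, rfl⟩
      have hsub1 : star p ⊆ star u0 := fun z hz => hp.trans hz
      have hsub2 : star q ⊆ star u0 := fun z hz => hq.trans hz
      have hle1 : (star u0).ncard ≤ (star p).ncard := by
        rw [hcard0]; exact Nat.sInf_le hS1
      have hle2 : (star u0).ncard ≤ (star q).ncard := by
        rw [hcard0]; exact Nat.sInf_le hS2
      have heq1 : star p = star u0 :=
        Set.eq_of_subset_of_ncard_le hsub1 hle1 (hstarfin u0)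
      have heq2 : star q = star u0 :=
        Set.eq_of_subset_of_ncard_le hsub2 hle2 (hstarfin u0)
      have hu0p : u0 ∈ star p := by
        rw [heq1]; exact Relation.ReflTransGen.refl
      have hu0q : u0 ∈ star q := by
        rw [heq2]; exact Relation.ReflTransGen.refl
      have hrpq : X.obj.rel p q := by
        have h1 : Relation.ReflTransGen X.obj.rel p q := hu0p.trans hq
        rcases rtg_of_trans htrans h1 with h2 | h2
        · exact absurd h2 hpq
        · exact h2
      have hrqp : X.obj.rel q p := by
        have h1 : Relation.ReflTransGen X.obj.rel q p := hu0q.trans hp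
        rcases rtg_of_trans htrans h1 with h2 | h2
        · exact absurd h2 (Ne.symm hpq)
        · exact h2
      -- swap p and q on the subframe generated by p
      have claimL : ∀ x y, X.obj.rel x y → X.obj.rel (swap2 p q x) y := by
        intro x y hxy
        unfold swap2
        split_ifs with h1 h2
        · subst h1; exact htrans hrqp hxy
        · subst h2; exact htrans hrpq hxy
        · exact hxy
      have claimR : ∀ x y, X.obj.rel x y → X.obj.rel x (swap2 p q y) := by
        intro x y hxy
        unfold swap2
        split_ifs with h1 h2
        · subst h1; exact htrans hxy hrpq
        · subst h2; exact htrans hxy hrqp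
        · exact hxy
      have hstab : ∀ ⦃x y : (X.obj.subframe (star p)).carrier⦄,
          (X.obj.subframe (star p)).rel x y → X.obj.rel (swap2 p q x.1) (swap2 p q y.1) :=
        fun x y hxy => claimR _ _ (claimL _ _ hxy)
      have hopen : ∀ (x : (X.obj.subframe (star p)).carrier) v',
          X.obj.rel (swap2 p q x.1) v' →
          ∃ x', (X.obj.subframe (star p)).rel x x' ∧ swap2 p q x'.1 = v' := by
        intro x v' hrel
        have hrel2 : X.obj.rel x.1 (swap2 p q v') := by
          have h1 := claimR _ _ (claimL _ _ hrel)
          rwa [swap2_invol hpq] at h1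
        exact ⟨⟨swap2 p q v', x.2.tail hrel2⟩, hrel2, swap2_invol hpq v'⟩
      have hcomm : ∀ x : (X.obj.subframe (star p)).carrier, F (swap2 p q x.1) = F x.1 := by
        intro x
        unfold swap2
        split_ifs with h1 h2
        · rw [h1]; exact hFpq.symm
        · rw [h2]; exact hFpq
        · rfl
      have hkey := key (star p) (hstarup p) ⟨fun x => swap2 p q x.1, hstab, hopen⟩ hcomm
      have h1 : swap2 p q p = p := hkey ⟨p, Relation.ReflTransGen.refl⟩
      exact hpq ((swap2_left p q).symm.trans h1).symm
  · -- injective → mono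
    intro hinj
    constructor
    intro Z g h hgh
    apply InducedCategory.hom_ext
    apply PMor.ext
    funext z
    exact hinj (congrFun (congrArg (fun k => k.hom.toFun) hgh) z)
end

section
/- Let W₀, W₁, V be locally finite preorders (Kripke frames whose relation is reflexive and transitive and which are locally finite), and let f₀ : W₀ → V and f₁ : W₁ → V be surjective p-morphisms. Define U = {(w₀,w₁) ∈ W₀ × W₁ | f₀(w₀) = f₁(w₁)} with the componentwise relation (w₀,w₁) ≺ (w₀',w₁') iff w₀ ≺ w₀' and w₁ ≺ w₁'. Then U is a locally finite preorder, the two projections π₀ : U → W₀ and π₁ : U → W₁ are surjective p-morphisms, and f₀ ∘ π₀ = f₁ ∘ π₁. -/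
/-- A Kripke frame `(W, r)` is locally finite if each set
`w* = {w' | Relation.ReflTransGen r w w'}` is finite. -/
def LocFin {W : Type*} (r : W → W → Prop) : Prop :=
  ∀ w : W, {w' | Relation.ReflTransGen r w w'}.Finite

/-!
The frame `U` is the set-theoretic pullback `Function.Pullback f₀ f₁` with the product relation.
Since `U` embeds into `W₀ × W₁` by a stable map, every `u*` lies in `(π₀ u)* × (π₁ u)*`, which
is finite. To lift a step `π₀ u ≺ w₀'` to `U`, push it down to `f₀ (π₀ u) = f₁ (π₁ u) ≺ f₀ w₀'`
by stability of `f₀` and lift it to `W₁` by openness of `f₁`; surjectivity of `π₀` likewise comes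
from surjectivity of `f₁`, and symmetrically for `π₁`.
-/

open Function

namespace LocFin

variable {α β : Type*} {r : α → α → Prop} {s : β → β → Prop}

theorem of_injective (hs : LocFin s) (g : α → β) (hg : Injective g)
    (hstab : ∀ a b, r a b → s (g a) (g b)) : LocFin r := fun a =>
  ((hs (g a)).preimage hg.injOn).subset fun _ hb => hb.lift g hstab

theorem prod (hr : LocFin r) (hs : LocFin s) :
    LocFin fun p q : α × β => r p.1 q.1 ∧ s p.2 q.2 := fun p =>
  ((hr p.1).prod (hs p.2)).subset fun _ hq =>
    ⟨hq.lift Prod.fst fun _ _ h => h.1, hq.lift Prod.snd fun _ _ h => h.2⟩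

end LocFin

namespace Function.Pullback

variable {W₀ W₁ V : Type*} {r₀ : W₀ → W₀ → Prop} {r₁ : W₁ → W₁ → Prop} {rV : V → V → Prop}
  {f₀ : W₀ → V} {f₁ : W₁ → V}

variable (r₀ r₁) in
def rel (p q : Pullback f₀ f₁) : Prop := r₀ p.fst q.fst ∧ r₁ p.snd q.snd

theorem locFin_rel (h₀ : LocFin r₀) (h₁ : LocFin r₁) : LocFin (rel (f₀ := f₀) (f₁ := f₁) r₀ r₁) :=
  (h₀.prod h₁).of_injective Subtype.val Subtype.val_injective fun _ _ h => h

theorem isPMorphism_fst (hf₀ : ∀ ⦃w w'⦄, r₀ w w' → rV (f₀ w) (f₀ w'))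
    (hf₁ : ∀ w v', rV (f₁ w) v' → ∃ w', r₁ w w' ∧ f₁ w' = v') :
    IsPMorphism (rel r₀ r₁) r₀ (fst : Pullback f₀ f₁ → W₀) := by
  refine ⟨fun _ _ h => h.1, ?_⟩
  rintro ⟨⟨w₀, w₁⟩, hp⟩ w₀' h
  obtain ⟨w₁', hr, he⟩ := hf₁ w₁ (f₀ w₀') (hp ▸ hf₀ h)
  exact ⟨⟨⟨w₀', w₁'⟩, he.symm⟩, ⟨h, hr⟩, rfl⟩

theorem isPMorphism_snd (hf₀ : ∀ w v', rV (f₀ w) v' → ∃ w', r₀ w w' ∧ f₀ w' = v')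
    (hf₁ : ∀ ⦃w w'⦄, r₁ w w' → rV (f₁ w) (f₁ w')) :
    IsPMorphism (rel r₀ r₁) r₁ (snd : Pullback f₀ f₁ → W₁) := by
  refine ⟨fun _ _ h => h.2, ?_⟩
  rintro ⟨⟨w₀, w₁⟩, hp⟩ w₁' h
  obtain ⟨w₀', hr, he⟩ := hf₀ w₀ (f₁ w₁') (hp.symm ▸ hf₁ h)
  exact ⟨⟨⟨w₀', w₁'⟩, he⟩, ⟨hr, h⟩, rfl⟩

theorem fst_surjective (hf₁ : Surjective f₁) : Surjective (fst : Pullback f₀ f₁ → W₀) := fun w₀ =>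
  let ⟨w₁, hw₁⟩ := hf₁ (f₀ w₀)
  ⟨⟨⟨w₀, w₁⟩, hw₁.symm⟩, rfl⟩

theorem snd_surjective (hf₀ : Surjective f₀) : Surjective (snd : Pullback f₀ f₁ → W₁) := fun w₁ =>
  let ⟨w₀, hw₀⟩ := hf₀ (f₁ w₁)
  ⟨⟨⟨w₀, w₁⟩, hw₀⟩, rfl⟩

end Function.Pullback

theorem statement7_general {W₀ W₁ V : Type*}
    (r₀ : W₀ → W₀ → Prop) (r₁ : W₁ → W₁ → Prop) (rV : V → V → Prop)
    (h₀refl : Reflexive r₀) (h₀trans : Transitive r₀) (h₀lf : LocFin r₀)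
    (h₁refl : Reflexive r₁) (h₁trans : Transitive r₁) (h₁lf : LocFin r₁)
    (f₀ : W₀ → V) (f₁ : W₁ → V)
    (hf₀ : IsPMorphism r₀ rV f₀) (hf₀s : Function.Surjective f₀)
    (hf₁ : IsPMorphism r₁ rV f₁) (hf₁s : Function.Surjective f₁) :
    letI U := {p : W₀ × W₁ // f₀ p.1 = f₁ p.2}
    letI rU : U → U → Prop := fun p q => r₀ p.1.1 q.1.1 ∧ r₁ p.1.2 q.1.2
    letI π₀ : U → W₀ := fun p => p.1.1
    letI π₁ : U → W₁ := fun p => p.1.2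
    Reflexive rU ∧ Transitive rU ∧ LocFin rU ∧
    IsPMorphism rU r₀ π₀ ∧ Function.Surjective π₀ ∧
    IsPMorphism rU r₁ π₁ ∧ Function.Surjective π₁ ∧
    f₀ ∘ π₀ = f₁ ∘ π₁ :=
  ⟨fun _ => ⟨h₀refl _, h₁refl _⟩,
    fun _ _ _ hpq hqs => ⟨h₀trans hpq.1 hqs.1, h₁trans hpq.2 hqs.2⟩,
    Pullback.locFin_rel h₀lf h₁lf,
    Pullback.isPMorphism_fst hf₀.1 hf₁.2, Pullback.fst_surjective hf₁s,
    Pullback.isPMorphism_snd hf₀.2 hf₁.1, Pullback.snd_surjective hf₀s,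
    funext Subtype.prop⟩

/-- Let `W₀, W₁, V` be locally finite preorders and
`f₀ : W₀ → V`, `f₁ : W₁ → V` surjective p-morphisms.  Then the frame
`U = {(w₀, w₁) | f₀ w₀ = f₁ w₁}` with the componentwise relation is a locally finite
preorder, the two projections are surjective p-morphisms, and `f₀ ∘ π₀ = f₁ ∘ π₁`. -/
theorem statement7 {W₀ W₁ V : Type*}
    (r₀ : W₀ → W₀ → Prop) (r₁ : W₁ → W₁ → Prop) (rV : V → V → Prop)
    (h₀refl : Reflexive r₀) (h₀trans : Transitive r₀) (h₀lf : LocFin r₀)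
    (h₁refl : Reflexive r₁) (h₁trans : Transitive r₁) (h₁lf : LocFin r₁)
    (hVrefl : Reflexive rV) (hVtrans : Transitive rV) (hVlf : LocFin rV)
    (f₀ : W₀ → V) (f₁ : W₁ → V)
    (hf₀ : IsPMorphism r₀ rV f₀) (hf₀s : Function.Surjective f₀)
    (hf₁ : IsPMorphism r₁ rV f₁) (hf₁s : Function.Surjective f₁) :
    letI U := {p : W₀ × W₁ // f₀ p.1 = f₁ p.2}
    letI rU : U → U → Prop := fun p q => r₀ p.1.1 q.1.1 ∧ r₁ p.1.2 q.1.2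
    letI π₀ : U → W₀ := fun p => p.1.1
    letI π₁ : U → W₁ := fun p => p.1.2
    Reflexive rU ∧ Transitive rU ∧ LocFin rU ∧
    IsPMorphism rU r₀ π₀ ∧ Function.Surjective π₀ ∧
    IsPMorphism rU r₁ π₁ ∧ Function.Surjective π₁ ∧
    f₀ ∘ π₀ = f₁ ∘ π₁ :=
  statement7_general r₀ r₁ rV h₀refl h₀trans h₀lf h₁refl h₁trans h₁lf f₀ f₁ hf₀ hf₀s hf₁ hf₁s
end

section
/- Let [n] denote the n-element reflexive chain. Let f : [k+1] → [k] and g : [m] → [k] be surjective p-morphisms (k, m ≥ 1). Then there exist surjective p-morphisms f̄ : [m+1] → [m] and ḡ : [m+1] → [k+1] such that f ∘ ḡ = g ∘ f̄. -/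
/-- The `n`-element reflexive chain `[n]`, realized as `Fin n` with `i ≺ j ↔ i ≤ j`. -/
def chainRel (n : ℕ) : Fin n → Fin n → Prop := (· ≤ ·)

/-!
A surjective p-morphism between finite reflexive chains is the same as a monotone surjection,
and a monotone surjection `[k+1] → [k]` is a degeneracy `Fin.predAbove t`, collapsing `t` and
`t + 1`. Pick `s` with `g s = t` and take `f̄ = Fin.predAbove s`. The map `ḡ` follows
`g ∘ f̄`, sending the points up to `s` into the lower copy and the points above `s` into the
shifted upper copy. Since `g` is monotone, the first group lands at or below `t` and the second
at or above `t + 1`, so `Fin.predAbove t` undoes the shift.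
-/

theorem Monotone.isPMorphism_of_surjective {α β : Type*} [LinearOrder α] [PartialOrder β]
    {f : α → β} (hf : Monotone f) (hs : Function.Surjective f) :
    IsPMorphism (· ≤ ·) (· ≤ ·) f := by
  refine ⟨fun _ _ h ↦ hf h, fun w v hv ↦ ?_⟩
  obtain ⟨w', rfl⟩ := hs v
  rcases le_total w w' with h | h
  · exact ⟨w', h, rfl⟩
  · exact ⟨w, le_rfl, le_antisymm hv (hf h)⟩

theorem IsPMorphism.monotone {α β : Type*} [Preorder α] [Preorder β] {f : α → β}
    (hf : IsPMorphism (· ≤ ·) (· ≤ ·) f) : Monotone f :=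
  fun _ _ h ↦ hf.1 h

theorem exists_eq_predAbove_of_monotone_of_surjective {n : ℕ} {f : Fin (n + 1) → Fin n}
    (hf : Monotone f) (hs : Function.Surjective f) : ∃ p : Fin n, f = p.predAbove := by
  cases n with
  | zero => exact (f 0).elim0
  | succ n =>
    let θ : SimplexCategory.mk (n + 1) ⟶ SimplexCategory.mk n := SimplexCategory.mkHom ⟨f, hf⟩
    have : CategoryTheory.Epi θ := SimplexCategory.epi_iff_surjective.2 hs
    obtain ⟨p, hp⟩ := SimplexCategory.eq_σ_of_epi θ
    exact ⟨p, congrArg (fun θ ↦ (θ.toOrderHom : Fin (n + 2) → Fin (n + 1))) hp⟩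

section LiftPredAbove

open Fin

variable {m k : ℕ} (g : Fin m → Fin k) (s : Fin m)

def liftPredAbove (i : Fin (m + 1)) : Fin (k + 1) :=
  if i ≤ castSucc s then castSucc (g (s.predAbove i)) else succ (g (s.predAbove i))

theorem liftPredAbove_castSucc {i : Fin m} (h : i ≤ s) :
    liftPredAbove g s (castSucc i) = castSucc (g i) := by
  rw [liftPredAbove, if_pos (castSucc_le_castSucc_iff.2 h), predAbove_castSucc_of_le _ _ h]

theorem liftPredAbove_succ {i : Fin m} (h : s ≤ i) :
    liftPredAbove g s (succ i) = succ (g i) := by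
  rw [liftPredAbove, if_neg (not_le.2 (castSucc_lt_succ_iff.2 h)), predAbove_succ_of_le _ _ h]

variable {g}

theorem predAbove_comp_liftPredAbove (hg : Monotone g) :
    (g s).predAbove ∘ liftPredAbove g s = g ∘ s.predAbove := by
  ext i : 1
  by_cases h : i ≤ castSucc s
  · have : g (s.predAbove i) ≤ g s := hg <| by
      simpa using predAbove_right_monotone s h
    simp [liftPredAbove, h, predAbove_castSucc_of_le _ _ this]
  · have : g s ≤ g (s.predAbove i) := hg <| by
      simpa using predAbove_right_monotone s (castSucc_lt_iff_succ_le.1 (not_le.1 h))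
    simp [liftPredAbove, h, predAbove_succ_of_le _ _ this]

theorem monotone_liftPredAbove (hg : Monotone g) : Monotone (liftPredAbove g s) := by
  intro i j hij
  have hgij := hg (predAbove_right_monotone s hij)
  unfold liftPredAbove
  split_ifs with hi hj hj
  · exact castSucc_le_castSucc_iff.2 hgij
  · exact (castSucc_le_castSucc_iff.2 hgij).trans castSucc_lt_succ.le
  · exact absurd (hij.trans hj) hi
  · exact succ_le_succ_iff.2 hgij

theorem surjective_liftPredAbove (hg : Monotone g) (hgs : Function.Surjective g) :
    Function.Surjective (liftPredAbove g s) := by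
  intro c
  rcases le_or_gt c (castSucc (g s)) with hc | hc
  · obtain ⟨x, rfl⟩ := exists_castSucc_eq.2 (hc.trans_lt (castSucc_lt_last _)).ne
    obtain ⟨j, rfl⟩ := hgs x
    refine ⟨castSucc (min j s), ?_⟩
    rw [liftPredAbove_castSucc g s (min_le_right _ _), hg.map_min,
      min_eq_left (castSucc_le_castSucc_iff.1 hc)]
  · obtain ⟨x, rfl⟩ := exists_succ_eq.2 (Fin.ne_zero_of_lt hc)
    obtain ⟨j, rfl⟩ := hgs x
    refine ⟨succ (max j s), ?_⟩
    rw [liftPredAbove_succ g s (le_max_right _ _), hg.map_max,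
      max_eq_left (castSucc_lt_succ_iff.1 hc)]

end LiftPredAbove

theorem statement8_general (k m : ℕ)
    (f : Fin (k + 1) → Fin k) (g : Fin m → Fin k)
    (hf : IsPMorphism (chainRel (k + 1)) (chainRel k) f) (hfs : Function.Surjective f)
    (hg : IsPMorphism (chainRel m) (chainRel k) g) (hgs : Function.Surjective g) :
    ∃ (fb : Fin (m + 1) → Fin m) (gb : Fin (m + 1) → Fin (k + 1)),
      IsPMorphism (chainRel (m + 1)) (chainRel m) fb ∧ Function.Surjective fb ∧
      IsPMorphism (chainRel (m + 1)) (chainRel (k + 1)) gb ∧ Function.Surjective gb ∧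
      f ∘ gb = g ∘ fb := by
  obtain ⟨t, rfl⟩ := exists_eq_predAbove_of_monotone_of_surjective hf.monotone hfs
  obtain ⟨s, rfl⟩ := hgs t
  have hgb := surjective_liftPredAbove s hg.monotone hgs
  exact ⟨s.predAbove, liftPredAbove g s,
    (Fin.predAbove_right_monotone s).isPMorphism_of_surjective (Fin.predAbove_surjective s),
    Fin.predAbove_surjective s,
    (monotone_liftPredAbove s hg.monotone).isPMorphism_of_surjective hgb, hgb,
    predAbove_comp_liftPredAbove s hg.monotone⟩

/-- Given surjective p-morphisms `f : [k+1] → [k]` and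
`g : [m] → [k]` between reflexive chains (`k, m ≥ 1`), there exist surjective
p-morphisms `f̄ : [m+1] → [m]` and `ḡ : [m+1] → [k+1]` with `f ∘ ḡ = g ∘ f̄`. -/
theorem statement8 (k m : ℕ) (hk : 1 ≤ k) (hm : 1 ≤ m)
    (f : Fin (k + 1) → Fin k) (g : Fin m → Fin k)
    (hf : IsPMorphism (chainRel (k + 1)) (chainRel k) f) (hfs : Function.Surjective f)
    (hg : IsPMorphism (chainRel m) (chainRel k) g) (hgs : Function.Surjective g) :
    ∃ (fb : Fin (m + 1) → Fin m) (gb : Fin (m + 1) → Fin (k + 1)),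
      IsPMorphism (chainRel (m + 1)) (chainRel m) fb ∧ Function.Surjective fb ∧
      IsPMorphism (chainRel (m + 1)) (chainRel (k + 1)) gb ∧ Function.Surjective gb ∧
      f ∘ gb = g ∘ fb :=
  statement8_general k m f g hf hfs hg hgs
end

section
/- Let [n] denote the n-element reflexive chain. For all n, m, k ≥ 1 and all surjective p-morphisms f : [n] → [k] and g : [m] → [k], there exist t ≥ 1 and surjective p-morphisms p : [t] → [n] and q : [t] → [m] such that f ∘ p = g ∘ q. -/
theorem isPMorphism_of_monotone_of_surjective {α β : Type*} [LinearOrder α] [PartialOrder β]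
    {f : α → β} (hmono : Monotone f) (hsurj : Function.Surjective f) :
    IsPMorphism (· ≤ ·) (· ≤ ·) f := by
  refine ⟨fun _ _ h => hmono h, fun w v hwv => ?_⟩
  obtain ⟨u, rfl⟩ := hsurj v
  rcases le_total w u with hwu | huw
  · exact ⟨u, hwu, rfl⟩
  · exact ⟨w, le_rfl, le_antisymm hwv (hmono huw)⟩

theorem IsChain.exists_monotone_fin_range_eq {α : Type*} [PartialOrder α] {s : Set α}
    (hs : IsChain (· ≤ ·) s) (hfin : s.Finite) :
    ∃ (t : ℕ) (e : Fin t → α), Monotone e ∧ Set.range e = s := by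
  classical
  let := hs.linearOrder
  have := hfin.fintype
  let e := monoEquivOfFin s rfl
  exact ⟨_, Subtype.val ∘ e, fun _ _ h => e.monotone h, by
    rw [Set.range_comp, e.range_eq, Set.image_univ, Subtype.range_coe]⟩

section Staircase

variable {α β γ : Type*} [LinearOrder α] [LinearOrder β] {f : α → γ} {g : β → γ}

def staircase (f : α → γ) (g : β → γ) : Set (α × β) :=
  {x | f x.1 = g x.2 ∧
    (x.2 ∈ lowerBounds (g ⁻¹' {g x.2}) ∨ x.1 ∈ upperBounds (f ⁻¹' {f x.1}))}

theorem isChain_staircase [PartialOrder γ] (hf : Monotone f) (hg : Monotone g) :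
    IsChain (· ≤ ·) (staircase f g) := by
  suffices key : ∀ x ∈ staircase f g, ∀ y ∈ staircase f g, x.1 ≤ y.1 → x ≤ y ∨ y ≤ x by
    intro x hx y hy _
    rcases le_total x.1 y.1 with h | h
    · exact key x hx y hy h
    · exact (key y hy x hx h).symm
  rintro x ⟨hx, hx_bound⟩ y ⟨hy, -⟩ h1
  have hgxy : g x.2 ≤ g y.2 := hx ▸ hy ▸ hf h1
  obtain hlt | heq := hgxy.lt_or_eq
  · exact Or.inl ⟨h1, (hg.reflect_lt hlt).le⟩
  rcases hx_bound with hx_min | hx_max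
  · exact Or.inl ⟨h1, hx_min heq.symm⟩
  · have h2 : y.1 ≤ x.1 := hx_max (show f y.1 = f x.1 by rw [hx, hy, heq])
    rcases le_total x.2 y.2 with h | h
    · exact Or.inl ⟨h1, h⟩
    · exact Or.inr ⟨h2, h⟩

theorem image_fst_staircase [Finite β] (hg : Function.Surjective g) :
    Prod.fst '' staircase f g = Set.univ := by
  refine Set.eq_univ_of_forall fun i => ?_
  obtain ⟨j, hj, hj_min⟩ := Set.exists_min_image (g ⁻¹' {f i}) id (Set.toFinite _) (hg (f i))
  refine ⟨(i, j), ⟨hj.symm, Or.inl fun j' hj' => hj_min j' ?_⟩, rfl⟩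
  exact hj'.trans hj

theorem image_snd_staircase [Finite α] (hf : Function.Surjective f) :
    Prod.snd '' staircase f g = Set.univ := by
  refine Set.eq_univ_of_forall fun j => ?_
  obtain ⟨i, hi, hi_max⟩ := Set.exists_max_image (f ⁻¹' {g j}) id (Set.toFinite _) (hf (g j))
  refine ⟨(i, j), ⟨hi, Or.inr fun i' hi' => hi_max i' ?_⟩, rfl⟩
  exact hi'.trans hi

end Staircase

theorem statement9_general (n m k : ℕ) (hn : 1 ≤ n)
    (f : Fin n → Fin k) (g : Fin m → Fin k)
    (hf : IsPMorphism (chainRel n) (chainRel k) f) (hfs : Function.Surjective f)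
    (hg : IsPMorphism (chainRel m) (chainRel k) g) (hgs : Function.Surjective g) :
    ∃ (t : ℕ), 1 ≤ t ∧
      ∃ (p : Fin t → Fin n) (q : Fin t → Fin m),
        IsPMorphism (chainRel t) (chainRel n) p ∧ Function.Surjective p ∧
        IsPMorphism (chainRel t) (chainRel m) q ∧ Function.Surjective q ∧
        f ∘ p = g ∘ q := by
  have hmf : Monotone f := fun _ _ h => hf.1 h
  have hmg : Monotone g := fun _ _ h => hg.1 h
  obtain ⟨t, e, he, hrange⟩ :=
    (isChain_staircase hmf hmg).exists_monotone_fin_range_eq (Set.toFinite _)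
  have hp : Function.Surjective (Prod.fst ∘ e) := Set.range_eq_univ.mp <| by
    rw [Set.range_comp, hrange, image_fst_staircase hgs]
  have hq : Function.Surjective (Prod.snd ∘ e) := Set.range_eq_univ.mp <| by
    rw [Set.range_comp, hrange, image_snd_staircase hfs]
  refine ⟨t, (hp ⟨0, hn⟩).choose.pos, Prod.fst ∘ e, Prod.snd ∘ e,
    isPMorphism_of_monotone_of_surjective (monotone_fst.comp he) hp, hp,
    isPMorphism_of_monotone_of_surjective (monotone_snd.comp he) hq, hq, ?_⟩
  funext s
  exact (hrange ▸ Set.mem_range_self s : e s ∈ staircase f g).1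

/-- For all `n, m, k ≥ 1` and all surjective p-morphisms
`f : [n] → [k]` and `g : [m] → [k]` between reflexive chains, there exist `t ≥ 1` and
surjective p-morphisms `p : [t] → [n]`, `q : [t] → [m]` with `f ∘ p = g ∘ q`. -/
theorem statement9 (n m k : ℕ) (hn : 1 ≤ n) (hm : 1 ≤ m) (hk : 1 ≤ k)
    (f : Fin n → Fin k) (g : Fin m → Fin k)
    (hf : IsPMorphism (chainRel n) (chainRel k) f) (hfs : Function.Surjective f)
    (hg : IsPMorphism (chainRel m) (chainRel k) g) (hgs : Function.Surjective g) :
    ∃ (t : ℕ), 1 ≤ t ∧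
      ∃ (p : Fin t → Fin n) (q : Fin t → Fin m),
        IsPMorphism (chainRel t) (chainRel n) p ∧ Function.Surjective p ∧
        IsPMorphism (chainRel t) (chainRel m) q ∧ Function.Surjective q ∧
        f ∘ p = g ∘ q :=
  statement9_general n m k hn f g hf hfs hg hgs
end

section
/- Let 𝖢 be a small category. For a presheaf F : 𝖢ᵒᵖ → Set, let K(F) be the Kripke frame whose points are the pairs (c, x) with c an object of 𝖢 and x ∈ F(c), with relation (c,x) ≺ (d,y) iff there exists h : d → c in 𝖢 with F(h)(x) = y. Then: (i) the relation on K(F) is reflexive and transitive (a preorder); (ii) for every natural transformation α : F → G, the map K(α) : K(F) → K(G) sending (c,x) to (c, α_c(x)) is a p-morphism; (iii) K is a faithful functor from the presheaf category on 𝖢 to the category of Kripke frames and p-morphisms; (iv) if moreover every slice category 𝖢/c is finite, then K(F) is locally finite for every presheaf F. -/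
open CategoryTheory

universe u

open Opposite

variable {C : Type u} [SmallCategory C]

/-- The relation on the set of elements of a presheaf `F`:
`(c, x) ≺ (d, y)` iff there is `h : d ⟶ c` in `C` with `F(h)(x) = y`. -/
def KRel (F : Cᵒᵖ ⥤ Type u) :
    ((c : C) × F.obj (op c)) → ((c : C) × F.obj (op c)) → Prop :=
  fun x y => ∃ h : y.1 ⟶ x.1, F.map h.op x.2 = y.2

/-- The Kripke frame of elements `K(F)` of a presheaf `F`. -/
def KObj (F : Cᵒᵖ ⥤ Type u) : KFrame.{u} :=
  ⟨(c : C) × F.obj (op c), KRel F⟩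

/-- The map on elements induced by a natural transformation: `(c, x) ↦ (c, α_c x)`. -/
def KMapFun {F G : Cᵒᵖ ⥤ Type u} (α : F ⟶ G) :
    ((c : C) × F.obj (op c)) → ((c : C) × G.obj (op c)) :=
  fun x => ⟨x.1, α.app (op x.1) x.2⟩

lemma KMap_isPMorphism {F G : Cᵒᵖ ⥤ Type u} (α : F ⟶ G) :
    IsPMorphism (KRel F) (KRel G) (KMapFun α) := by
  constructor
  · rintro ⟨c, x⟩ ⟨d, y⟩ ⟨h, hh⟩
    dsimp only at h hh
    refine ⟨h, ?_⟩
    show G.map h.op (α.app (op c) x) = α.app (op d) y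
    rw [← hh]
    exact (NatTrans.naturality_apply α h.op x).symm
  · rintro ⟨c, x⟩ ⟨d, y⟩ ⟨h, hh⟩
    dsimp only [KMapFun] at h hh
    refine ⟨⟨d, F.map h.op x⟩, ⟨h, rfl⟩, ?_⟩
    show (⟨d, α.app (op d) (F.map h.op x)⟩ : (c : C) × G.obj (op c)) = ⟨d, y⟩
    rw [NatTrans.naturality_apply α h.op x]
    exact congrArg (fun z => (⟨d, z⟩ : (c : C) × G.obj (op c))) hh

/-- The functor `K` from presheaves on `C` to the category of Kripke frames and
p-morphisms. -/
def KFunctor : (Cᵒᵖ ⥤ Type u) ⥤ KFrame.{u} where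
  obj := KObj
  map α := ⟨KMapFun α, KMap_isPMorphism α⟩
  map_id _ := PMor.ext rfl
  map_comp _ _ := PMor.ext rfl

/-- For a small category `C` and presheaves `F, G : Cᵒᵖ → Set`:
(i) the relation of `K(F)` is reflexive and transitive (a preorder);
(ii) for every natural transformation `α : F ⟶ G` the induced map
`K(α) : K(F) → K(G)`, `(c, x) ↦ (c, α_c x)`, is a p-morphism;
(iii) `K` is a faithful functor from presheaves on `C` to the category of Kripke
frames and p-morphisms; and
(iv) if every slice category `C/c` is finite, then `K(F)` is locally finite for
every presheaf `F`. -/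
theorem statement13 :
    (∀ F : Cᵒᵖ ⥤ Type u, Reflexive (KRel F) ∧ Transitive (KRel F)) ∧
    (∀ (F G : Cᵒᵖ ⥤ Type u) (α : F ⟶ G),
      IsPMorphism (KRel F) (KRel G) (KMapFun α)) ∧
    (KFunctor (C := C)).Faithful ∧
    ((∀ c : C, Finite ((d : C) × (d ⟶ c))) →
      ∀ (F : Cᵒᵖ ⥤ Type u) (w : (c : C) × F.obj (op c)),
        {w' | Relation.ReflTransGen (KRel F) w w'}.Finite) := by
  have hrefl : ∀ F : Cᵒᵖ ⥤ Type u, Reflexive (KRel F) := by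
    intro F ⟨c, x⟩
    exact ⟨𝟙 c, by simp⟩
  have htrans : ∀ F : Cᵒᵖ ⥤ Type u, Transitive (KRel F) := by
    rintro F ⟨c, x⟩ ⟨d, y⟩ ⟨e, z⟩ ⟨h, hh⟩ ⟨k, hk⟩
    dsimp only at *
    exact ⟨k ≫ h, by rw [op_comp, FunctorToTypes.map_comp_apply, hh, hk]⟩
  refine ⟨fun F => ⟨hrefl F, htrans F⟩, fun F G α => KMap_isPMorphism α, ⟨?_⟩, ?_⟩
  · intro F G α β h
    ext c x
    have := congrArg (fun f => f.toFun ⟨c.unop, x⟩) h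
    have h2 : (⟨c.unop, α.app (op c.unop) x⟩ : (d : C) × G.obj (op d)) =
        ⟨c.unop, β.app (op c.unop) x⟩ := this
    exact eq_of_heq (Sigma.ext_iff.mp h2).2
  · intro hfin F w
    have hsub : {w' | Relation.ReflTransGen (KRel F) w w'} ⊆
        Set.range (fun p : (d : C) × (d ⟶ w.1) => (⟨p.1, F.map p.2.op w.2⟩ :
          (c : C) × F.obj (op c))) := by
      intro w' hw'
      have : KRel F w w' := by
        induction hw' with
        | refl => exact hrefl F w
        | tail _ h ih => exact htrans F ih h
      obtain ⟨h, hh⟩ := this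
      exact ⟨⟨w'.1, h⟩, Sigma.ext rfl (heq_of_eq hh)⟩
    have := hfin w.1
    exact Set.Finite.subset (Set.finite_range _) hsub
end

section
/- The category of locally finite preorders and p-morphisms has finite limits: the one-element reflexive frame is a terminal object, the equalizer of f, g : W → V is the inclusion of the largest generated subframe of W on which f and g agree, and binary products exist. -/
universe u

def IsLFPreorder {W : Type*} (r : W → W → Prop) : Prop :=
  Reflexive r ∧ Transitive r ∧ ∀ w : W, {w' | Relation.ReflTransGen r w w'}.Finite

universe v

open Function Relation Set

/-!
The terminal object and the equalizer are routine; the content is in the product.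

A point of the product `W₀ × W₁` is a bisimilarity class of pointed finite preorders `C`
carrying p-morphisms to `W₀` and `W₁` (finite cones), and the class of `(C, a)` sees exactly
the classes of `(C, a')` with `a ≺ a'`. Given p-morphisms `f₀, f₁` out of a locally finite
preorder `U`, the cone `u*` is finite, so `u` is sent to the class of `(u*, u)`. Everything
rests on one observation: two label-preserving p-morphisms into a common frame identify
bisimilar points (their fibre product is a bisimulation). This makes the map a p-morphism
and forces every competitor to agree with it.
-/

section PMorphism

variable {W V X : Type*} {rW : W → W → Prop} {rV : V → V → Prop} {rX : X → X → Prop}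

theorem IsPMorphism.comp {g : V → X} {f : W → V} (hg : IsPMorphism rV rX g)
    (hf : IsPMorphism rW rV f) : IsPMorphism rW rX (g ∘ f) := by
  refine ⟨fun _ _ h => hg.1 (hf.1 h), fun w x hx => ?_⟩
  obtain ⟨v, hv, rfl⟩ := hg.2 (f w) x hx
  obtain ⟨w', hw', rfl⟩ := hf.2 w v hv
  exact ⟨w', hw', rfl⟩

theorem IsPMorphism.exists_of_reflTransGen {f : W → V} (hf : IsPMorphism rW rV f) {w : W} {v : V}
    (h : ReflTransGen rV (f w) v) : ∃ w', ReflTransGen rW w w' ∧ f w' = v := by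
  induction h with
  | refl => exact ⟨w, .refl, rfl⟩
  | tail _ hv ih =>
    obtain ⟨w', hw', rfl⟩ := ih
    obtain ⟨w'', hw'', rfl⟩ := hf.2 w' _ hv
    exact ⟨w'', hw'.tail hw'', rfl⟩

theorem isPMorphism_onFun {e : W → V} (he : ∀ w v, rV (e w) v → v ∈ range e) :
    IsPMorphism (rV on e) rV e := by
  refine ⟨fun _ _ h => h, fun w v h => ?_⟩
  obtain ⟨w', rfl⟩ := he w v h
  exact ⟨w', h, rfl⟩

theorem IsPMorphism.codRestrict {h : W → V} (hh : IsPMorphism rW rV h) {s : Set V}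
    (hs : ∀ w, h w ∈ s) : IsPMorphism rW (rV on Subtype.val) (s.codRestrict h hs) := by
  refine ⟨fun _ _ h' => hh.1 h', fun w v hv => ?_⟩
  obtain ⟨w', hw', hv'⟩ := hh.2 w v hv
  exact ⟨w', hw', Subtype.ext hv'⟩

theorem IsPMorphism.of_comp_of_cover {ι : Type*} {α : ι → Type*}
    {rα : ∀ i, α i → α i → Prop} {φ : ∀ i, α i → W} (hφ : ∀ i, IsPMorphism (rα i) rW (φ i))
    (hcover : ∀ w, ∃ i a, φ i a = w) {q : W → V} (hq : ∀ i, IsPMorphism (rα i) rV (q ∘ φ i)) :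
    IsPMorphism rW rV q := by
  refine ⟨fun w w' hww' => ?_, fun w v hv => ?_⟩
  · obtain ⟨i, a, rfl⟩ := hcover w
    obtain ⟨a', ha', rfl⟩ := (hφ i).2 a w' hww'
    exact (hq i).1 ha'
  · obtain ⟨i, a, rfl⟩ := hcover w
    obtain ⟨a', ha', rfl⟩ := (hq i).2 a v hv
    exact ⟨φ i a', (hφ i).1 ha', rfl⟩

theorem isPMorphism_of_subsingleton [Subsingleton V] (hr : ∀ w, rW w w) (f : W → V) :
    IsPMorphism rW (fun _ _ => True) f :=
  ⟨fun _ _ _ => trivial, fun w _ _ => ⟨w, hr w, Subsingleton.elim _ _⟩⟩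

end PMorphism

section LFPreorder

variable {W V : Type*} {r : W → W → Prop}

theorem IsLFPreorder.reflTransGen_eq (h : IsLFPreorder r) : ReflTransGen r = r :=
  have : Std.Refl r := ⟨h.1⟩
  have : IsTrans W r := ⟨h.2.1⟩
  reflTransGen_eq_self

theorem IsLFPreorder.finite_setOf_rel (h : IsLFPreorder r) (w : W) : {w' | r w w'}.Finite := by
  simpa only [h.reflTransGen_eq] using h.2.2 w

theorem IsLFPreorder.onFun {e : V → W} (he : Injective e) (h : IsLFPreorder r) :
    IsLFPreorder (r on e) :=
  ⟨fun v => h.1 (e v), fun _ _ _ h₁ h₂ => h.2.1 h₁ h₂, fun v =>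
    ((h.2.2 (e v)).preimage he.injOn).subset fun _ hv' => ReflTransGen.lift e le_rfl _ _ hv'⟩

end LFPreorder

section Equalizer

variable {W V : Type*} {rW : W → W → Prop} {f g : W → V}

def equalizerSet (rW : W → W → Prop) (f g : W → V) : Set W :=
  {w | ∀ w', ReflTransGen rW w w' → f w' = g w'}

theorem equalizerSet_upward {w w' : W} (hw : w ∈ equalizerSet rW f g) (h : rW w w') :
    w' ∈ equalizerSet rW f g :=
  fun w'' h' => hw w'' (h'.head h)

theorem eq_of_mem_equalizerSet {w : W} (hw : w ∈ equalizerSet rW f g) : f w = g w :=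
  hw w .refl

theorem subset_equalizerSet {G : Set W} (hG : ∀ w ∈ G, ∀ w', rW w w' → w' ∈ G)
    (hfg : ∀ w ∈ G, f w = g w) : G ⊆ equalizerSet rW f g := by
  intro w hw w' h
  refine hfg w' ?_
  induction h with
  | refl => exact hw
  | tail _ h ih => exact hG _ ih _ h

theorem isPMorphism_val_equalizerSet :
    IsPMorphism (rW on Subtype.val) rW (Subtype.val : equalizerSet rW f g → W) :=
  isPMorphism_onFun fun w w' h => ⟨⟨w', equalizerSet_upward w.2 h⟩, rfl⟩

theorem existsUnique_lift_equalizerSet {A : Type*} {rA : A → A → Prop} {h : A → W}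
    (hh : IsPMorphism rA rW h) (hfg : f ∘ h = g ∘ h) :
    ∃! h' : A → equalizerSet rW f g,
      IsPMorphism rA (rW on Subtype.val) h' ∧ Subtype.val ∘ h' = h := by
  have hmem : ∀ a, h a ∈ equalizerSet rW f g := by
    intro a w' hw'
    obtain ⟨a', -, rfl⟩ := hh.exists_of_reflTransGen hw'
    exact congrFun hfg a'
  exact ⟨Set.codRestrict h _ hmem, ⟨hh.codRestrict hmem, rfl⟩,
    fun _ hh' => Subtype.val_injective.comp_left hh'.2⟩

end Equalizer

section Bisimulation

variable {α β γ L : Type*}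

structure IsBisimulation (rα : α → α → Prop) (lα : α → L) (rβ : β → β → Prop) (lβ : β → L)
    (Z : α → β → Prop) : Prop where
  lab_eq : ∀ ⦃a b⦄, Z a b → lα a = lβ b
  forth : ∀ ⦃a b a'⦄, Z a b → rα a a' → ∃ b', rβ b b' ∧ Z a' b'
  back : ∀ ⦃a b b'⦄, Z a b → rβ b b' → ∃ a', rα a a' ∧ Z a' b'

theorem isBisimulation_of_isPMorphism {rα : α → α → Prop} {rβ : β → β → Prop}
    {rγ : γ → γ → Prop} {lα : α → L} {lβ : β → L} {lγ : γ → L} {φ : α → γ} {ψ : β → γ}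
    (hφ : IsPMorphism rα rγ φ) (hφl : lγ ∘ φ = lα) (hψ : IsPMorphism rβ rγ ψ)
    (hψl : lγ ∘ ψ = lβ) : IsBisimulation rα lα rβ lβ (fun a b => φ a = ψ b) := by
  refine ⟨fun a b h => ?_, fun a b a' h ha' => ?_, fun a b b' h hb' => ?_⟩
  · rw [← hφl, ← hψl]
    exact congrArg lγ h
  · obtain ⟨b', hb', h'⟩ := hψ.2 b (φ a') (h ▸ hφ.1 ha')
    exact ⟨b', hb', h'.symm⟩
  · obtain ⟨a', ha', h'⟩ := hφ.2 a (ψ b') (h ▸ hψ.1 hb')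
    exact ⟨a', ha', h'⟩

end Bisimulation

section Product

variable {W₀ W₁ : Type u} {r₀ : W₀ → W₀ → Prop} {r₁ : W₁ → W₁ → Prop}

/-- A cone over `W₀, W₁` with finite apex. The apex is some `Fin n`, so that these cones form a
type in the universe of `W₀` and `W₁`. -/
structure FinCone (r₀ : W₀ → W₀ → Prop) (r₁ : W₁ → W₁ → Prop) : Type u where
  n : ℕ
  rel : Fin n → Fin n → Prop
  lab : Fin n → W₀ × W₁
  rel_refl : ∀ a, rel a a
  rel_trans : ∀ ⦃a b c⦄, rel a b → rel b c → rel a c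
  isPMorphism_fst : IsPMorphism rel r₀ (Prod.fst ∘ lab)
  isPMorphism_snd : IsPMorphism rel r₁ (Prod.snd ∘ lab)

def FinCone.Bisimilar (p q : Σ C : FinCone r₀ r₁, Fin C.n) : Prop :=
  ∃ Z, IsBisimulation p.1.rel p.1.lab q.1.rel q.1.lab Z ∧ Z p.2 q.2

variable (r₀ r₁) in
def ProdFrame : Type u :=
  Quot (FinCone.Bisimilar (r₀ := r₀) (r₁ := r₁))

def FinCone.toProdFrame (C : FinCone r₀ r₁) (a : Fin C.n) : ProdFrame r₀ r₁ :=
  Quot.mk _ ⟨C, a⟩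

theorem FinCone.toProdFrame_eq_of_isBisimulation {C D : FinCone r₀ r₁}
    {Z : Fin C.n → Fin D.n → Prop} (hZ : IsBisimulation C.rel C.lab D.rel D.lab Z) {a : Fin C.n}
    {b : Fin D.n} (h : Z a b) : C.toProdFrame a = D.toProdFrame b :=
  Quot.sound ⟨Z, hZ, h⟩

theorem ProdFrame.exists_toProdFrame_eq (x : ProdFrame r₀ r₁) :
    ∃ (C : FinCone r₀ r₁) (a : Fin C.n), C.toProdFrame a = x := by
  obtain ⟨⟨C, a⟩, rfl⟩ := Quot.exists_rep x
  exact ⟨C, a, rfl⟩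

namespace ProdFrame

def lab : ProdFrame r₀ r₁ → W₀ × W₁ :=
  Quot.lift (fun p => p.1.lab p.2) fun _ _ ⟨_, hZ, h⟩ => hZ.lab_eq h

def rel : ProdFrame r₀ r₁ → ProdFrame r₀ r₁ → Prop :=
  Quot.lift (fun p y => ∃ a, p.1.rel p.2 a ∧ p.1.toProdFrame a = y) fun p q ⟨_, hZ, h⟩ => by
    funext y
    refine propext ⟨?_, ?_⟩
    · rintro ⟨a, ha, rfl⟩
      obtain ⟨b, hb, hab⟩ := hZ.forth h ha
      exact ⟨b, hb, (FinCone.toProdFrame_eq_of_isBisimulation hZ hab).symm⟩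
    · rintro ⟨b, hb, rfl⟩
      obtain ⟨a, ha, hab⟩ := hZ.back h hb
      exact ⟨a, ha, FinCone.toProdFrame_eq_of_isBisimulation hZ hab⟩

end ProdFrame

namespace FinCone

theorem isPMorphism_toProdFrame (C : FinCone r₀ r₁) :
    IsPMorphism C.rel ProdFrame.rel C.toProdFrame :=
  ⟨fun _ a' h => ⟨a', h, rfl⟩, fun _ _ h => h⟩

theorem lab_comp_toProdFrame (C : FinCone r₀ r₁) : ProdFrame.lab ∘ C.toProdFrame = C.lab :=
  rfl

theorem toProdFrame_eq_of_isPMorphism {C D : FinCone r₀ r₁} {Y : Type v} {rY : Y → Y → Prop}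
    {lY : Y → W₀ × W₁} {φ : Fin C.n → Y} {ψ : Fin D.n → Y} (hφ : IsPMorphism C.rel rY φ)
    (hφl : lY ∘ φ = C.lab) (hψ : IsPMorphism D.rel rY ψ) (hψl : lY ∘ ψ = D.lab)
    {a : Fin C.n} {b : Fin D.n} (h : φ a = ψ b) : C.toProdFrame a = D.toProdFrame b :=
  toProdFrame_eq_of_isBisimulation (isBisimulation_of_isPMorphism hφ hφl hψ hψl) h

theorem exists_isPMorphism_mem_range {U : Type v} {rU : U → U → Prop} (hU : IsLFPreorder rU)
    {f₀ : U → W₀} {f₁ : U → W₁} (hf₀ : IsPMorphism rU r₀ f₀) (hf₁ : IsPMorphism rU r₁ f₁)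
    (u : U) : ∃ (C : FinCone r₀ r₁) (e : Fin C.n → U),
      IsPMorphism C.rel rU e ∧ (fun u => (f₀ u, f₁ u)) ∘ e = C.lab ∧ u ∈ range e := by
  obtain ⟨n, e, -, he⟩ := (hU.finite_setOf_rel u).fin_param
  have hup : ∀ i u', rU (e i) u' → u' ∈ range e := fun i u' h => by
    have hi : e i ∈ {u' | rU u u'} := he ▸ mem_range_self i
    exact he ▸ hU.2.1 hi h
  have he' : IsPMorphism (rU on e) rU e := isPMorphism_onFun hup
  exact ⟨⟨n, rU on e, fun i => (f₀ (e i), f₁ (e i)), fun i => hU.1 (e i),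
    fun _ _ _ h₁ h₂ => hU.2.1 h₁ h₂, hf₀.comp he', hf₁.comp he'⟩, e, he', rfl,
    he ▸ hU.1 u⟩

end FinCone

namespace ProdFrame

theorem isPMorphism_of_comp {V : Type v} {rV : V → V → Prop} {q : ProdFrame r₀ r₁ → V}
    (hq : ∀ C : FinCone r₀ r₁, IsPMorphism C.rel rV (q ∘ C.toProdFrame)) :
    IsPMorphism rel rV q :=
  IsPMorphism.of_comp_of_cover FinCone.isPMorphism_toProdFrame exists_toProdFrame_eq hq

theorem isLFPreorder_rel : IsLFPreorder (rel (r₀ := r₀) (r₁ := r₁)) := by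
  refine ⟨fun x => ?_, fun x y z hxy hyz => ?_, fun x => ?_⟩
  · obtain ⟨C, a, rfl⟩ := exists_toProdFrame_eq x
    exact ⟨a, C.rel_refl a, rfl⟩
  · obtain ⟨C, a, rfl⟩ := exists_toProdFrame_eq x
    obtain ⟨a', ha', rfl⟩ := hxy
    obtain ⟨a'', ha'', rfl⟩ := hyz
    exact ⟨a'', C.rel_trans ha' ha'', rfl⟩
  · obtain ⟨C, a, rfl⟩ := exists_toProdFrame_eq x
    refine (finite_range C.toProdFrame).subset fun y hy => ?_
    obtain ⟨a', -, rfl⟩ := C.isPMorphism_toProdFrame.exists_of_reflTransGen hy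
    exact mem_range_self a'

theorem isPMorphism_fst : IsPMorphism rel r₀ (Prod.fst ∘ lab (r₀ := r₀) (r₁ := r₁)) :=
  isPMorphism_of_comp FinCone.isPMorphism_fst

theorem isPMorphism_snd : IsPMorphism rel r₁ (Prod.snd ∘ lab (r₀ := r₀) (r₁ := r₁)) :=
  isPMorphism_of_comp FinCone.isPMorphism_snd

theorem existsUnique_lift {U : Type v} {rU : U → U → Prop} (hU : IsLFPreorder rU)
    {f₀ : U → W₀} {f₁ : U → W₁} (hf₀ : IsPMorphism rU r₀ f₀) (hf₁ : IsPMorphism rU r₁ f₁) :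
    ∃! h : U → ProdFrame r₀ r₁,
      IsPMorphism rU rel h ∧ (Prod.fst ∘ lab) ∘ h = f₀ ∧ (Prod.snd ∘ lab) ∘ h = f₁ := by
  choose C e he hel hu using FinCone.exists_isPMorphism_mem_range hU hf₀ hf₁
  choose a ha using hu
  set lift : U → ProdFrame r₀ r₁ := fun u => (C u).toProdFrame (a u)
  have lab_lift : lab ∘ lift = fun u => (f₀ u, f₁ u) :=
    funext fun u => (congrFun (hel u) (a u)).symm.trans (congrArg (fun u => (f₀ u, f₁ u)) (ha u))
  have lift_comp : ∀ u, lift ∘ e u = (C u).toProdFrame := fun u => funext fun i =>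
    FinCone.toProdFrame_eq_of_isPMorphism (he _) (hel _) (he u) (hel u) (ha _ ▸ rfl)
  have hlift : IsPMorphism rU rel lift := IsPMorphism.of_comp_of_cover he
    (fun u => ⟨u, a u, ha u⟩) fun u => lift_comp u ▸ (C u).isPMorphism_toProdFrame
  refine ⟨lift, ⟨hlift, congrArg (Prod.fst ∘ ·) lab_lift, congrArg (Prod.snd ∘ ·) lab_lift⟩,
    fun h ⟨hh, hh₀, hh₁⟩ => funext fun u => ?_⟩
  have lab_h : lab ∘ h = fun u => (f₀ u, f₁ u) :=
    funext fun u => Prod.ext (congrFun hh₀ u) (congrFun hh₁ u)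
  obtain ⟨D, b, hb⟩ := exists_toProdFrame_eq (h u)
  rw [← hb]
  refine FinCone.toProdFrame_eq_of_isPMorphism D.isPMorphism_toProdFrame
    D.lab_comp_toProdFrame (hh.comp (he u)) ?_ (hb.trans (congrArg h (ha u)).symm)
  rw [← hel u, ← lab_h]
  rfl

end ProdFrame

end Product

/-- The category of locally finite preorders and p-morphisms has
finite limits: the one-element reflexive frame is terminal, the equalizer of a
parallel pair `f, g : W → V` is the inclusion of the largest generated subframe of
`W` on which `f` and `g` agree, and binary products exist. -/
theorem statement19 :
    -- the one-element reflexive frame is terminal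
    (∀ (W : Type u) (r : W → W → Prop), IsLFPreorder r →
      ∃! u : W → PUnit.{u + 1},
        IsPMorphism r (fun _ _ => True) u) ∧
    -- equalizers: the largest generated subframe on which `f` and `g` agree
    (∀ (W V : Type u) (rW : W → W → Prop) (rV : V → V → Prop),
      IsLFPreorder rW → IsLFPreorder rV →
      ∀ f g : W → V, IsPMorphism rW rV f → IsPMorphism rW rV g →
      letI E : Set W := {w | ∀ w', Relation.ReflTransGen rW w w' → f w' = g w'}
      letI rE : E → E → Prop := fun a b => rW a.1 b.1
      -- `E` is a generated subframe on which `f` and `g` agree, and it is the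
      -- largest such
      (∀ w ∈ E, ∀ w', rW w w' → w' ∈ E) ∧
      (∀ w ∈ E, f w = g w) ∧
      (∀ G : Set W, (∀ w ∈ G, ∀ w', rW w w' → w' ∈ G) → (∀ w ∈ G, f w = g w) →
        G ⊆ E) ∧
      -- the inclusion of `E` is the equalizer of `f` and `g`
      IsLFPreorder rE ∧ IsPMorphism rE rW (Subtype.val : E → W) ∧
      (∀ (A : Type u) (rA : A → A → Prop), IsLFPreorder rA →
        ∀ h : A → W, IsPMorphism rA rW h → f ∘ h = g ∘ h →
          ∃! h' : A → E, IsPMorphism rA rE h' ∧ Subtype.val ∘ h' = h)) ∧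
    -- binary products exist
    (∀ (W₀ W₁ : Type u) (r₀ : W₀ → W₀ → Prop) (r₁ : W₁ → W₁ → Prop),
      IsLFPreorder r₀ → IsLFPreorder r₁ →
      ∃ (X : Type u) (rX : X → X → Prop) (p₀ : X → W₀) (p₁ : X → W₁),
        IsLFPreorder rX ∧ IsPMorphism rX r₀ p₀ ∧ IsPMorphism rX r₁ p₁ ∧
        ∀ (U : Type u) (rU : U → U → Prop), IsLFPreorder rU →
          ∀ (f₀ : U → W₀) (f₁ : U → W₁),
            IsPMorphism rU r₀ f₀ → IsPMorphism rU r₁ f₁ →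
            ∃! u : U → X, IsPMorphism rU rX u ∧ p₀ ∘ u = f₀ ∧ p₁ ∘ u = f₁) := by
  refine ⟨fun W r hr => ?_, fun W V rW rV hW _ f g _ _ => ?_, fun W₀ W₁ r₀ r₁ _ _ => ?_⟩
  · exact ⟨fun _ => PUnit.unit, isPMorphism_of_subsingleton hr.1 _,
      fun _ _ => Subsingleton.elim _ _⟩
  · exact ⟨fun _ hw _ => equalizerSet_upward hw, fun _ => eq_of_mem_equalizerSet,
      fun _ => subset_equalizerSet, hW.onFun Subtype.val_injective, isPMorphism_val_equalizerSet,
      fun _ _ _ _ => existsUnique_lift_equalizerSet⟩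
  · exact ⟨ProdFrame r₀ r₁, ProdFrame.rel, _, _, ProdFrame.isLFPreorder_rel,
      ProdFrame.isPMorphism_fst, ProdFrame.isPMorphism_snd,
      fun _ _ hU _ _ => ProdFrame.existsUnique_lift hU⟩
end
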